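/- arXiv:2101.12513 — 7 statements merged into one kernel-verified Lean document; each statement's English description precedes it below -/
import Mathlib

section
/- Let α > 0, β > 0, C* > 0, p > 0 and c ∈ (0,1]. Let f : [0,∞) → ℝ be non-increasing with c(1+r)^{−p} ≤ f(r) ≤ 1/4 for all r ≥ 0, and for each r ≥ 0 let t₀(r) > 0 be the unique positive solution of exp(−C*·t₀(r)·f(r)^{−α}) = t₀(r)·(1+r)^{−β}. Then there exist constants c₁, c₂ > 0 such that c₁·f(r)^α·log(2+r) ≤ t₀(r) ≤ c₂·f(r)^α·log(2+r) for all r ≥ 0. -/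
/-!
Put `u = C* t₀ f^{-α}`. Taking logarithms, the crossing equation becomes
`u + log u = β log (1 + r) + log C* - α log f`, and the bounds `c (1+r)^{-p} ≤ f ≤ 1/4` squeeze
the right-hand side between two affine functions of `log (2 + r)` with positive slopes.
Since `u ↦ u + log u` is increasing and `log u` is negligible against `u`, this forces
`u ≃ log (2 + r)`, i.e. `t₀ = u f^α / C* ≃ f^α log (2 + r)`.
-/

open Real

lemma add_log_lt_add_log {u v : ℝ} (hu : 0 < u) (huv : u < v) : u + log u < v + log v :=
  add_lt_add huv (log_lt_log hu huv)

lemma exists_mul_le_of_le_add_log (a b : ℝ) (ha : 0 < a) :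
    ∃ k > 0, ∀ u L : ℝ, 0 < u → 0 < L → a * L - b ≤ u + log u → k * L ≤ u := by
  -- `k ≤ a/2` and `log k ≤ log (a/2) + 1 - b`, with `log L ≤ (a/2) L - 1 - log (a/2)`,
  -- give `k L + log (k L) ≤ a L - b`
  refine ⟨a / 2 * exp (-|b|), by positivity, fun u L hu hL hle => ?_⟩
  by_contra! hlt
  have hk : a / 2 * exp (-|b|) ≤ a / 2 := mul_le_of_le_one_right (by positivity)
    (exp_le_one_iff.mpr (neg_nonpos.mpr (abs_nonneg b)))
  have hlogL : log (a / 2 * L) ≤ a / 2 * L - 1 := log_le_sub_one_of_pos (by positivity)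
  rw [log_mul (by positivity) hL.ne'] at hlogL
  have hlogkL : log (a / 2 * exp (-|b|) * L) = log (a / 2) - |b| + log L := by
    rw [log_mul (by positivity) hL.ne', log_mul (by positivity) (exp_pos _).ne', log_exp,
      sub_eq_add_neg]
  have := add_log_lt_add_log hu hlt
  have := mul_le_mul_of_nonneg_right hk hL.le
  linarith [le_abs_self b]

lemma exists_le_mul_of_add_log_le (A B L₀ : ℝ) (hA : 0 ≤ A) (hL₀ : 0 < L₀) :
    ∃ K > 0, ∀ u L : ℝ, 0 < u → L₀ ≤ L → u + log u ≤ A * L + B → u ≤ K * L := by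
  refine ⟨A + (|B| + 1) / L₀, by positivity, fun u L hu hL hle => ?_⟩
  have hBL : |B| + 1 ≤ (|B| + 1) / L₀ * L := by
    rw [div_mul_eq_mul_div, le_div_iff₀ hL₀]
    exact mul_le_mul_of_nonneg_left hL (by positivity)
  have hAL : 0 ≤ A * L := mul_nonneg hA (hL₀.le.trans hL)
  rcases le_or_gt u 1 with hu1 | hu1
  · nlinarith [abs_nonneg B]
  · nlinarith [log_pos hu1, le_abs_self B]

lemma add_log_eq_of_exp_neg_eq {C t F w α β : ℝ} (hC : 0 < C) (ht : 0 < t) (hF : 0 < F)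
    (hw : 0 < w) (h : exp (-(C * t * F ^ (-α))) = t * w ^ (-β)) :
    C * t * F ^ (-α) + log (C * t * F ^ (-α)) = β * log w + log C - α * log F := by
  have hlog := congrArg log h
  rw [log_exp, log_mul ht.ne' (rpow_pos_of_pos hw _).ne', log_rpow hw] at hlog
  rw [log_mul (by positivity) (rpow_pos_of_pos hF _).ne', log_mul hC.ne' ht.ne',
    log_rpow hF]
  linarith

section CrossingBounds

variable {α β p c F r : ℝ}

lemma le_mul_log_one_add_sub_mul_log (hα : 0 ≤ α) (hβ : 0 ≤ β) (hr : 0 ≤ r) (hF : 0 < F)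
    (hupp : F ≤ 1 / 4) :
    β * log (2 + r) - β * log 2 + α * log 4 ≤ β * log (1 + r) - α * log F := by
  have hF4 : log F ≤ -log 4 := by
    simpa [log_inv] using log_le_log hF (hupp.trans_eq (one_div 4))
  have h2r : log (2 + r) ≤ log 2 + log (1 + r) := by
    rw [← log_mul two_ne_zero (by linarith)]
    exact log_le_log (by linarith) (by linarith)
  nlinarith

lemma mul_log_one_add_sub_mul_log_le (hα : 0 ≤ α) (hβ : 0 ≤ β) (hp : 0 ≤ p) (hc : 0 < c)
    (hr : 0 ≤ r) (hlow : c * (1 + r) ^ (-p) ≤ F) :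
    β * log (1 + r) - α * log F ≤ (β + α * p) * log (2 + r) - α * log c := by
  have h1r : 0 < 1 + r := by linarith
  have hcF : log c - p * log (1 + r) ≤ log F := by
    have := log_le_log (by positivity) hlow
    rwa [log_mul hc.ne' (rpow_pos_of_pos h1r _).ne', log_rpow h1r, neg_mul] at this
  have h12 : log (1 + r) ≤ log (2 + r) := log_le_log h1r (by linarith)
  have : 0 ≤ β + α * p := by positivity
  nlinarith

end CrossingBounds

theorem stmt3_general (α β Cstar p c : ℝ) (hα : 0 < α) (hβ : 0 < β) (hCstar : 0 < Cstar)
    (hp : 0 < p) (hc0 : 0 < c)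
    (f : ℝ → ℝ)
    (hlow : ∀ r : ℝ, 0 ≤ r → c * (1 + r) ^ (-p) ≤ f r)
    (hupp : ∀ r : ℝ, 0 ≤ r → f r ≤ 1 / 4)
    (t₀ : ℝ → ℝ) (ht₀pos : ∀ r : ℝ, 0 ≤ r → 0 < t₀ r)
    (ht₀eq : ∀ r : ℝ, 0 ≤ r →
      Real.exp (-(Cstar * t₀ r * f r ^ (-α))) = t₀ r * (1 + r) ^ (-β)) :
    ∃ c₁ c₂ : ℝ, 0 < c₁ ∧ 0 < c₂ ∧ ∀ r : ℝ, 0 ≤ r →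
      c₁ * (f r ^ α * Real.log (2 + r)) ≤ t₀ r ∧
      t₀ r ≤ c₂ * (f r ^ α * Real.log (2 + r)) := by
  obtain ⟨k, hk, hlower⟩ :=
    exists_mul_le_of_le_add_log β (β * log 2 - α * log 4 - log Cstar) hβ
  obtain ⟨K, hK, hupper⟩ := exists_le_mul_of_add_log_le (β + α * p)
    (log Cstar - α * log c) (log 2) (by positivity) (log_pos one_lt_two)
  refine ⟨k / Cstar, K / Cstar, div_pos hk hCstar, div_pos hK hCstar, fun r hr => ?_⟩
  have hfr : 0 < f r := lt_of_lt_of_le (by positivity) (hlow r hr)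
  have ht := ht₀pos r hr
  set u := Cstar * t₀ r * f r ^ (-α)
  have hu : 0 < u := by positivity
  have hL : log 2 ≤ log (2 + r) := log_le_log two_pos (by linarith)
  have hkey := add_log_eq_of_exp_neg_eq hCstar ht hfr (by linarith) (ht₀eq r hr)
  have hlo := le_mul_log_one_add_sub_mul_log hα.le hβ.le hr hfr (hupp r hr)
  have hhi := mul_log_one_add_sub_mul_log_le hα.le hβ.le hp.le hc0 hr (hlow r hr)
  have ht₀ : t₀ r = u * f r ^ α / Cstar := by
    simp only [u, rpow_neg hfr.le]
    field_simp [(rpow_pos_of_pos hfr α).ne']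
  rw [ht₀]
  constructor
  · calc k / Cstar * (f r ^ α * log (2 + r)) = k * log (2 + r) * f r ^ α / Cstar := by ring
      _ ≤ u * f r ^ α / Cstar := by
        gcongr
        exact hlower u _ hu ((log_pos one_lt_two).trans_le hL) (by linarith)
  · calc u * f r ^ α / Cstar ≤ K * log (2 + r) * f r ^ α / Cstar := by
          gcongr
          exact hupper u _ hu hL (by linarith)
      _ = K / Cstar * (f r ^ α * log (2 + r)) := by ring

/-- Let `α, β, C*, p > 0` and `c ∈ (0,1]`. Let `f` be non-increasing on `[0,∞)` with
`c*(1+r)^(-p) ≤ f r ≤ 1/4` for all `r ≥ 0`, and for each `r ≥ 0` let `t₀ r > 0` solve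
`exp (-(C* * t₀ r * (f r)^(-α))) = t₀ r * (1+r)^(-β)`.  Then there are constants
`c₁, c₂ > 0` with `c₁ * f r ^ α * log (2+r) ≤ t₀ r ≤ c₂ * f r ^ α * log (2+r)`
for all `r ≥ 0`. -/
theorem stmt3 (α β Cstar p c : ℝ) (hα : 0 < α) (hβ : 0 < β) (hCstar : 0 < Cstar)
    (hp : 0 < p) (hc0 : 0 < c) (hc1 : c ≤ 1)
    (f : ℝ → ℝ) (hmono : ∀ r s : ℝ, 0 ≤ r → r ≤ s → f s ≤ f r)
    (hlow : ∀ r : ℝ, 0 ≤ r → c * (1 + r) ^ (-p) ≤ f r)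
    (hupp : ∀ r : ℝ, 0 ≤ r → f r ≤ 1 / 4)
    (t₀ : ℝ → ℝ) (ht₀pos : ∀ r : ℝ, 0 ≤ r → 0 < t₀ r)
    (ht₀eq : ∀ r : ℝ, 0 ≤ r →
      Real.exp (-(Cstar * t₀ r * f r ^ (-α))) = t₀ r * (1 + r) ^ (-β)) :
    ∃ c₁ c₂ : ℝ, 0 < c₁ ∧ 0 < c₂ ∧ ∀ r : ℝ, 0 ≤ r →
      c₁ * (f r ^ α * Real.log (2 + r)) ≤ t₀ r ∧
      t₀ r ≤ c₂ * (f r ^ α * Real.log (2 + r)) :=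
  stmt3_general α β Cstar p c hα hβ hCstar hp hc0 f hlow hupp t₀ ht₀pos ht₀eq
end

section
/- Let α ∈ (0,2), θ > 1/α and let d ≥ 2 be an integer. With f(s) := (log(2+s))^{−θ}, g(s) := (log(2+s))^{1−θα}, g⁻¹(t) := inf{s ≥ 0 : g(s) ≤ t} and s₁(t) := max(g⁻¹(t), 2), the following holds: for all constants c₁, c₂, c₃ > 0 there exist c₄, c₅ > 0 such that for all t ∈ (0,1], ∫₀^{c₁·s₁(c₂·t)} (log(2+s))^{−θ(d−1)}·exp(−c₃·t·(log(2+s))^{θα}) ds ≤ c₄·exp(c₅·t^{−1/(θα−1)}). -/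
/-!
The integrand is bounded by the constant `log 2 ^ (-θ(d-1))`, so the integral is at most a
constant times the length `c₁ s₁(c₂ t)` of the interval. With `a = 1 - θα < 0`, the point
`s = exp (u ^ a⁻¹)` satisfies `log (2+s) ^ a ≤ u`, so `g⁻¹ u ≤ exp (u ^ a⁻¹)`, and
`a⁻¹ = -1/(θα-1)`.
-/

namespace Real

theorem log_two_add_rpow_le_of_exp_rpow_inv_le {a u s : ℝ} (ha : a < 0) (hu : 0 < u)
    (hs : exp (u ^ a⁻¹) ≤ 2 + s) : log (2 + s) ^ a ≤ u := by
  have hE : u ^ a⁻¹ ≤ log (2 + s) := by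
    simpa only [log_exp] using log_le_log (exp_pos _) hs
  calc log (2 + s) ^ a ≤ (u ^ a⁻¹) ^ a := rpow_le_rpow_of_nonpos (rpow_pos_of_pos hu _) hE ha.le
    _ = u := by rw [← rpow_mul hu.le, inv_mul_cancel₀ ha.ne, rpow_one]

theorem sInf_log_two_add_rpow_le_le_exp {a u : ℝ} (ha : a < 0) (hu : 0 < u) :
    sInf {s : ℝ | 0 ≤ s ∧ log (2 + s) ^ a ≤ u} ≤ exp (u ^ a⁻¹) :=
  csInf_le ⟨0, fun _ hs ↦ hs.1⟩
    ⟨(exp_pos _).le, log_two_add_rpow_le_of_exp_rpow_inv_le ha hu (by linarith)⟩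

theorem norm_log_two_add_rpow_mul_exp_le {β γ c s : ℝ} (hβ : 0 ≤ β) (hc : 0 ≤ c)
    (hs : 0 ≤ s) :
    ‖log (2 + s) ^ (-β) * exp (-(c * log (2 + s) ^ γ))‖ ≤ log 2 ^ (-β) := by
  have hlog : log 2 ≤ log (2 + s) := log_le_log two_pos (by linarith)
  have hlog_pos : 0 < log (2 + s) := (log_pos one_lt_two).trans_le hlog
  have hexp : exp (-(c * log (2 + s) ^ γ)) ≤ 1 :=
    exp_le_one_iff.mpr (neg_nonpos.mpr (mul_nonneg hc (rpow_nonneg hlog_pos.le _)))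
  rw [norm_mul, norm_of_nonneg (rpow_nonneg hlog_pos.le _), norm_of_nonneg (exp_pos _).le]
  calc log (2 + s) ^ (-β) * exp (-(c * log (2 + s) ^ γ)) ≤ log (2 + s) ^ (-β) * 1 :=
        mul_le_mul_of_nonneg_left hexp (rpow_nonneg hlog_pos.le _)
    _ ≤ log 2 ^ (-β) := by
        rw [mul_one]
        exact rpow_le_rpow_of_nonpos (log_pos one_lt_two) hlog (neg_nonpos.mpr hβ)

theorem integral_log_two_add_rpow_mul_exp_le {β γ c L : ℝ} (hβ : 0 ≤ β) (hc : 0 ≤ c)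
    (hL : 0 ≤ L) :
    ∫ s in (0 : ℝ)..L, log (2 + s) ^ (-β) * exp (-(c * log (2 + s) ^ γ)) ≤
      log 2 ^ (-β) * L := by
  have hbound : ∀ s ∈ Set.uIoc 0 L,
      ‖log (2 + s) ^ (-β) * exp (-(c * log (2 + s) ^ γ))‖ ≤ log 2 ^ (-β) := by
    intro s hs
    rw [Set.uIoc_of_le hL] at hs
    exact norm_log_two_add_rpow_mul_exp_le hβ hc hs.1.le
  calc _ ≤ ‖∫ s in (0 : ℝ)..L, log (2 + s) ^ (-β) * exp (-(c * log (2 + s) ^ γ))‖ :=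
        le_abs_self _
    _ ≤ log 2 ^ (-β) * |L - 0| := intervalIntegral.norm_integral_le_of_norm_le_const hbound
    _ = log 2 ^ (-β) * L := by rw [sub_zero, abs_of_nonneg hL]

end Real

theorem stmt8_general (α θ : ℝ) (d : ℕ) (hα0 : 0 < α) (hθ : 1 / α < θ)
    (hd : 2 ≤ d)
    (g ginv s₁ : ℝ → ℝ)
    (hg : ∀ s : ℝ, g s = Real.log (2 + s) ^ (1 - θ * α))
    (hginv : ∀ t : ℝ, ginv t = sInf {s : ℝ | 0 ≤ s ∧ g s ≤ t})
    (hs₁ : ∀ t : ℝ, s₁ t = max (ginv t) 2)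
    (c₁ c₂ c₃ : ℝ) (hc₁ : 0 < c₁) (hc₂ : 0 < c₂) (hc₃ : 0 < c₃) :
    ∃ c₄ c₅ : ℝ, 0 < c₄ ∧ 0 < c₅ ∧ ∀ t : ℝ, 0 < t → t ≤ 1 →
      (∫ s in (0:ℝ)..(c₁ * s₁ (c₂ * t)),
          Real.log (2 + s) ^ (-(θ * ((d : ℝ) - 1))) *
            Real.exp (-(c₃ * t * Real.log (2 + s) ^ (θ * α)))) ≤
        c₄ * Real.exp (c₅ * t ^ (-1 / (θ * α - 1))) := by
  have ha : 1 - θ * α < 0 := by linarith [(div_lt_iff₀ hα0).mp hθ]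
  have hp : (1 - θ * α)⁻¹ = -1 / (θ * α - 1) := by rw [neg_div, ← div_neg, neg_sub, one_div]
  have hd1 : (1 : ℝ) ≤ d := by exact_mod_cast (by omega : 1 ≤ d)
  have hβ : 0 ≤ θ * ((d : ℝ) - 1) :=
    mul_nonneg ((div_pos one_pos hα0).trans hθ).le (by linarith)
  set p := -1 / (θ * α - 1)
  set M := Real.log 2 ^ (-(θ * ((d : ℝ) - 1)))
  refine ⟨2 * c₁ * M, c₂ ^ p, by positivity, Real.rpow_pos_of_pos hc₂ _, ?_⟩
  intro t ht _
  have hu : 0 < c₂ * t := mul_pos hc₂ ht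
  have hginv_le : ginv (c₂ * t) ≤ Real.exp ((c₂ * t) ^ p) := by
    simpa only [hginv, hg, hp] using Real.sInf_log_two_add_rpow_le_le_exp ha hu
  have hone_le : 1 ≤ Real.exp ((c₂ * t) ^ p) := Real.one_le_exp (Real.rpow_nonneg hu.le _)
  have hs₁_le : s₁ (c₂ * t) ≤ 2 * Real.exp ((c₂ * t) ^ p) := by
    rw [hs₁]; exact max_le (by linarith) (by linarith)
  have hs₁_nonneg : 0 ≤ s₁ (c₂ * t) := by rw [hs₁]; exact zero_le_two.trans (le_max_right _ _)
  calc _ ≤ M * (c₁ * s₁ (c₂ * t)) :=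
        Real.integral_log_two_add_rpow_mul_exp_le hβ (by positivity) (by positivity)
    _ ≤ M * (c₁ * (2 * Real.exp ((c₂ * t) ^ p))) := by gcongr
    _ = _ := by rw [Real.mul_rpow hc₂.le ht.le]; ring

/-- Upper bound for the long-time integral appearing in Example 1.6: with
`f s = (log (2+s))^(-θ)`, `g s = (log (2+s))^(1-θα)`, `g⁻¹ t = inf {s ≥ 0 : g s ≤ t}`
and `s₁ t = max (g⁻¹ t) 2`, for all `c₁, c₂, c₃ > 0` there are `c₄, c₅ > 0` such that
for all `t ∈ (0,1]`,
`∫₀^{c₁ s₁(c₂ t)} (log (2+s))^(-θ(d-1)) * exp (-c₃ t (log (2+s))^(θα)) ds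
  ≤ c₄ * exp (c₅ * t^(-1/(θα-1)))`. -/
theorem stmt8 (α θ : ℝ) (d : ℕ) (hα0 : 0 < α) (hα2 : α < 2) (hθ : 1 / α < θ)
    (hd : 2 ≤ d)
    (f g ginv s₁ : ℝ → ℝ)
    (hf : ∀ s : ℝ, f s = Real.log (2 + s) ^ (-θ))
    (hg : ∀ s : ℝ, g s = Real.log (2 + s) ^ (1 - θ * α))
    (hginv : ∀ t : ℝ, ginv t = sInf {s : ℝ | 0 ≤ s ∧ g s ≤ t})
    (hs₁ : ∀ t : ℝ, s₁ t = max (ginv t) 2)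
    (c₁ c₂ c₃ : ℝ) (hc₁ : 0 < c₁) (hc₂ : 0 < c₂) (hc₃ : 0 < c₃) :
    ∃ c₄ c₅ : ℝ, 0 < c₄ ∧ 0 < c₅ ∧ ∀ t : ℝ, 0 < t → t ≤ 1 →
      (∫ s in (0:ℝ)..(c₁ * s₁ (c₂ * t)),
          Real.log (2 + s) ^ (-(θ * ((d : ℝ) - 1))) *
            Real.exp (-(c₃ * t * Real.log (2 + s) ^ (θ * α)))) ≤
        c₄ * Real.exp (c₅ * t ^ (-1 / (θ * α - 1))) :=
  stmt8_general α θ d hα0 hθ hd g ginv s₁ hg hginv hs₁ c₁ c₂ c₃ hc₁ hc₂ hc₃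
end

section
/- Let α ∈ (0,2), θ > 1/α and let d ≥ 2 be an integer. With f(s) := (log(2+s))^{−θ}, g(s) := (log(2+s))^{1−θα}, g⁻¹(t) := inf{s ≥ 0 : g(s) ≤ t} and s₁(t) := max(g⁻¹(t), 2), the following holds: for all constants c₁, c₂, c₃ > 0 there exist c₆, c₇ > 0 such that for all t ∈ (0,1], ∫₀^{c₁·s₁(c₂·t)} (log(2+s))^{−θ(d−1)}·exp(−c₃·t·(log(2+s))^{θα}) ds ≥ c₆·exp(c₇·t^{−1/(θα−1)}). -/
/-!
The integrand is non-increasing in `s`, so the integral over `[0, L]` is at least `M` times its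
value at `M`, for any `M ≤ L`. Put `Y = t ^ (-1/(θα-1))`. Since `g⁻¹ u ≥ exp (u ^ (-1/(θα-1))) - 2`,
the upper limit `L` is at least a multiple of `exp (c Y)` for every small `c`; take `M` of that
size. At `s = exp (c Y)` we have `log (2 + s) ≤ log 3 + c Y`, and because `t * Y ^ (θα) = Y`, the
factor `exp (-c₃ t log (2 + s) ^ (θα))` costs at most `exp (-(const + c Y / 2))` once
`c ^ (θα - 1)` is small enough, and the factor `log (2 + s) ^ (-θ(d-1))` is at least a constant
times `exp (-(log 3 + c Y) / 4)`. Against the length `exp (c Y)` this leaves `exp (c Y / 4)`.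
-/

open MeasureTheory Real Set Filter Topology

theorem intervalIntegral.sub_mul_le_integral_of_antitoneOn {F : ℝ → ℝ} {a b c : ℝ}
    (hab : a ≤ b) (hbc : b ≤ c) (hF : AntitoneOn F (Icc a c)) (hFc : 0 ≤ F c) :
    (b - a) * F b ≤ ∫ x in a..c, F x := by
  have hint : ∀ {u v}, a ≤ u → u ≤ v → v ≤ c → IntervalIntegrable F volume u v :=
    fun hu huv hv =>
      (hF.mono (by rw [uIcc_of_le huv]; exact Icc_subset_Icc hu hv)).intervalIntegrable
  have hleft : (b - a) * F b ≤ ∫ x in a..b, F x := by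
    simpa using intervalIntegral.integral_mono_on hab intervalIntegrable_const
      (hint le_rfl hab hbc) fun x hx =>
        hF ⟨hx.1, hx.2.trans hbc⟩ ⟨hab, hbc⟩ hx.2
  have hright : 0 ≤ ∫ x in b..c, F x :=
    intervalIntegral.integral_nonneg hbc fun x hx =>
      hFc.trans (hF ⟨hab.trans hx.1, hx.2⟩ ⟨hab.trans hbc, le_rfl⟩ hx.2)
  rw [← intervalIntegral.integral_add_adjacent_intervals (hint le_rfl hab hbc)
    (hint hab hbc le_rfl)]
  linarith

theorem Real.exists_rpow_le_mul_exp {p ε : ℝ} (hp : 0 < p) (hε : 0 < ε) :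
    ∃ C > 0, ∀ y, 0 < y → y ^ p ≤ C * exp (ε * y) := by
  refine ⟨(p / ε) ^ p, by positivity, fun y hy => ?_⟩
  have hz : 0 ≤ ε * y / p := by positivity
  calc y ^ p = (p / ε) ^ p * (ε * y / p) ^ p := by
        rw [← mul_rpow (by positivity) hz]; field_simp
    _ ≤ (p / ε) ^ p * exp (ε * y / p) ^ p := by
        gcongr; linarith [add_one_le_exp (ε * y / p)]
    _ = (p / ε) ^ p * exp (ε * y) := by rw [← exp_mul, div_mul_cancel₀ _ hp.ne']

theorem Real.add_rpow_le_two_rpow_mul {x y E : ℝ} (hx : 0 ≤ x) (hy : 0 ≤ y) (hE : 1 ≤ E) :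
    (x + y) ^ E ≤ 2 ^ (E - 1) * (x ^ E + y ^ E) := by
  lift x to NNReal using hx
  lift y to NNReal using hy
  exact_mod_cast NNReal.rpow_add_le_mul_rpow_add_rpow x y hE

noncomputable def logIntegrand (p E k s : ℝ) : ℝ :=
  log (2 + s) ^ (-p) * exp (-(k * log (2 + s) ^ E))

section
variable {p E k : ℝ}

theorem logIntegrand_nonneg {s : ℝ} (hs : 0 ≤ s) : 0 ≤ logIntegrand p E k s :=
  mul_nonneg (rpow_nonneg (log_nonneg (by linarith)) _) (exp_pos _).le

theorem antitoneOn_logIntegrand (hp : 0 ≤ p) (hE : 0 ≤ E) (hk : 0 ≤ k) :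
    AntitoneOn (logIntegrand p E k) (Ici 0) := by
  intro s hs s' hs' hss'
  have ha : 0 < log (2 + s) := log_pos (by linarith [mem_Ici.1 hs])
  have haa' : log (2 + s) ≤ log (2 + s') := log_le_log (by linarith [mem_Ici.1 hs]) (by linarith)
  exact mul_le_mul (rpow_le_rpow_of_nonpos ha haa' (neg_nonpos.2 hp))
    (exp_le_exp.2 (neg_le_neg (mul_le_mul_of_nonneg_left (rpow_le_rpow ha.le haa' hE) hk)))
    (exp_pos _).le (rpow_nonneg ha.le _)

theorem inv_mul_exp_le_logIntegrand {C ε A s : ℝ} (hC0 : 0 < C)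
    (hC : ∀ a, 0 < a → a ^ p ≤ C * exp (ε * a)) (hε : 0 ≤ ε) (hE : 0 ≤ E) (hk : 0 ≤ k)
    (hs : 0 ≤ s) (hA : log (2 + s) ≤ A) :
    C⁻¹ * exp (-(ε * A + k * A ^ E)) ≤ logIntegrand p E k s := by
  have ha : 0 < log (2 + s) := log_pos (by linarith)
  have hlog : C⁻¹ * exp (-(ε * A)) ≤ log (2 + s) ^ (-p) := by
    rw [rpow_neg ha.le, exp_neg, ← mul_inv]
    gcongr
    exact (hC _ ha).trans (by gcongr)
  rw [neg_add, exp_add, ← mul_assoc]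
  unfold logIntegrand
  gcongr
end

theorem log_two_add_exp_le {x : ℝ} (hx : 0 ≤ x) : log (2 + exp x) ≤ log 3 + x := by
  rw [← log_exp x, ← log_mul (by norm_num) (exp_pos x).ne', log_exp]
  exact log_le_log (by positivity) (by linarith [one_le_exp hx])

theorem exp_rpow_div_two_le_max_sInf {E u : ℝ} (hE : 1 < E) (hu : 0 < u) :
    exp (u ^ (1 - E)⁻¹) / 2 ≤ max (sInf {s : ℝ | 0 ≤ s ∧ log (2 + s) ^ (1 - E) ≤ u}) 2 := by
  set X := u ^ (1 - E)⁻¹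
  have hz : 1 - E < 0 := by linarith
  have hmem : exp X ∈ {s : ℝ | 0 ≤ s ∧ log (2 + s) ^ (1 - E) ≤ u} := by
    refine ⟨(exp_pos X).le,
      (rpow_inv_le_iff_of_neg hu (log_pos (by linarith [exp_pos X])) hz).1 ?_⟩
    calc X = log (exp X) := (log_exp X).symm
      _ ≤ log (2 + exp X) := log_le_log (exp_pos X) (by linarith)
  have hlb : exp X - 2 ≤ sInf {s : ℝ | 0 ≤ s ∧ log (2 + s) ^ (1 - E) ≤ u} := by
    refine le_csInf ⟨_, hmem⟩ fun s ⟨hs, hgs⟩ => ?_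
    have h2s : 0 < 2 + s := by linarith
    have := exp_le_exp.2 ((rpow_inv_le_iff_of_neg hu (log_pos (by linarith)) hz).2 hgs)
    rw [exp_log h2s] at this
    linarith
  rcases le_total (exp X) 4 with h | h
  · exact le_max_of_le_right (by linarith)
  · exact le_max_of_le_left (by linarith)

theorem mul_rpow_rpow_inv_one_sub {t E : ℝ} (ht : 0 < t) (hE : E ≠ 1) :
    t * (t ^ (1 - E)⁻¹) ^ E = t ^ (1 - E)⁻¹ := by
  have h1E : 1 - E ≠ 0 := sub_ne_zero.2 hE.symm
  rw [← rpow_mul ht.le]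
  conv_lhs => arg 1; rw [← rpow_one t]
  rw [← rpow_add ht]
  congr 1
  field_simp
  ring

theorem exists_pos_le_and_mul_rpow_le {E : ℝ} (hE : 1 < E) {b : ℝ} (hb : 0 < b) (K : ℝ) :
    ∃ c, 0 < c ∧ c ≤ b ∧ K * c ^ (E - 1) ≤ 1 / 2 := by
  have h : Tendsto (fun c : ℝ => K * c ^ (E - 1)) (𝓝[>] 0) (𝓝 0) := by
    have := ((continuousAt_rpow_const 0 (E - 1) (Or.inr (by linarith))).tendsto.const_mul K)
    rw [zero_rpow (by linarith), mul_zero] at this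
    exact this.mono_left nhdsWithin_le_nhds
  have hcb : ∀ᶠ c in 𝓝[>] (0 : ℝ), c ≤ b :=
    (eventually_le_nhds hb).filter_mono nhdsWithin_le_nhds
  exact (eventually_mem_nhdsWithin.and
    (hcb.and (h.eventually (ge_mem_nhds one_half_pos)))).exists

theorem mul_rpow_add_le_of_mul_rpow_le_half {E K c c₃ t : ℝ} (hE : 1 < E) (hK : 0 ≤ K)
    (hc : 0 < c) (hc₃ : 0 ≤ c₃) (hsmall : c₃ * 2 ^ (E - 1) * c ^ (E - 1) ≤ 1 / 2)
    (ht0 : 0 < t) (ht1 : t ≤ 1) :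
    c₃ * t * (K + c * t ^ (1 - E)⁻¹) ^ E ≤ c₃ * 2 ^ (E - 1) * K ^ E + c / 2 * t ^ (1 - E)⁻¹ := by
  set Y := t ^ (1 - E)⁻¹
  have hY : 0 < Y := rpow_pos_of_pos ht0 _
  calc c₃ * t * (K + c * Y) ^ E ≤ c₃ * t * (2 ^ (E - 1) * (K ^ E + (c * Y) ^ E)) := by
        gcongr; exact add_rpow_le_two_rpow_mul hK (by positivity) hE.le
    _ = c₃ * 2 ^ (E - 1) * K ^ E * t + c₃ * 2 ^ (E - 1) * c ^ (E - 1) * c * (t * Y ^ E) := by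
        rw [mul_rpow hc.le hY.le, rpow_sub_one hc.ne']
        field_simp
    _ ≤ c₃ * 2 ^ (E - 1) * K ^ E * 1 + 1 / 2 * c * Y := by
        rw [mul_rpow_rpow_inv_one_sub ht0 hE.ne']
        gcongr
    _ = c₃ * 2 ^ (E - 1) * K ^ E + c / 2 * Y := by ring

theorem mul_exp_le_integral_logIntegrand {p E k m x L C ε : ℝ} (hp : 0 ≤ p) (hE : 0 ≤ E)
    (hk : 0 ≤ k) (hm0 : 0 ≤ m) (hm1 : m ≤ 1) (hx : 0 ≤ x) (hL : m * exp x ≤ L) (hC0 : 0 < C)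
    (hC : ∀ a, 0 < a → a ^ p ≤ C * exp (ε * a)) (hε : 0 ≤ ε) :
    m * C⁻¹ * exp (x - (ε * (log 3 + x) + k * (log 3 + x) ^ E)) ≤
      ∫ s in (0 : ℝ)..L, logIntegrand p E k s := by
  have hF := antitoneOn_logIntegrand hp hE hk
  have hb : 0 ≤ m * exp x := by positivity
  have hbx : m * exp x ≤ exp x := mul_le_of_le_one_left (exp_pos x).le hm1
  calc m * C⁻¹ * exp (x - (ε * (log 3 + x) + k * (log 3 + x) ^ E))
      = m * exp x * (C⁻¹ * exp (-(ε * (log 3 + x) + k * (log 3 + x) ^ E))) := by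
        rw [sub_eq_add_neg, exp_add]; ring
    _ ≤ m * exp x * logIntegrand p E k (exp x) := by
        gcongr
        exact inv_mul_exp_le_logIntegrand hC0 hC hε hE hk (exp_pos x).le (log_two_add_exp_le hx)
    _ ≤ (m * exp x - 0) * logIntegrand p E k (m * exp x) := by
        rw [sub_zero]
        exact mul_le_mul_of_nonneg_left (hF hb (exp_pos x).le hbx) hb
    _ ≤ ∫ s in (0 : ℝ)..L, logIntegrand p E k s :=
        intervalIntegral.sub_mul_le_integral_of_antitoneOn hb hL
          (hF.mono Icc_subset_Ici_self) (logIntegrand_nonneg (hb.trans hL))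

theorem stmt9_general (α θ : ℝ) (d : ℕ) (hα0 : 0 < α) (hθ : 1 / α < θ)
    (hd : 2 ≤ d)
    (g ginv s₁ : ℝ → ℝ)
    (hg : ∀ s : ℝ, g s = Real.log (2 + s) ^ (1 - θ * α))
    (hginv : ∀ t : ℝ, ginv t = sInf {s : ℝ | 0 ≤ s ∧ g s ≤ t})
    (hs₁ : ∀ t : ℝ, s₁ t = max (ginv t) 2)
    (c₁ c₂ c₃ : ℝ) (hc₁ : 0 < c₁) (hc₂ : 0 < c₂) (hc₃ : 0 < c₃) :
    ∃ c₆ c₇ : ℝ, 0 < c₆ ∧ 0 < c₇ ∧ ∀ t : ℝ, 0 < t → t ≤ 1 →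
      c₆ * Real.exp (c₇ * t ^ (-1 / (θ * α - 1))) ≤
        ∫ s in (0:ℝ)..(c₁ * s₁ (c₂ * t)),
          Real.log (2 + s) ^ (-(θ * ((d : ℝ) - 1))) *
            Real.exp (-(c₃ * t * Real.log (2 + s) ^ (θ * α))) := by
  obtain rfl : g = _ := funext hg
  obtain rfl : ginv = _ := funext hginv
  obtain rfl : s₁ = _ := funext hs₁
  beta_reduce
  have hθ0 : 0 < θ := (one_div_pos.2 hα0).trans hθ
  have hE : 1 < θ * α := (div_lt_iff₀ hα0).1 hθ
  have hp : 0 < θ * ((d : ℝ) - 1) :=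
    mul_pos hθ0 (by linarith [(Nat.ofNat_le_cast.2 hd : (2 : ℝ) ≤ d)])
  obtain ⟨c, hc, hcc₂, hsmall⟩ :=
    exists_pos_le_and_mul_rpow_le hE (rpow_pos_of_pos hc₂ (1 - θ * α)⁻¹) (c₃ * 2 ^ (θ * α - 1))
  obtain ⟨C, hC0, hC⟩ := exists_rpow_le_mul_exp hp (by norm_num : (0 : ℝ) < 1 / 4)
  set m := min (c₁ / 2) 1
  refine ⟨m * C⁻¹ * exp (-(log 3 / 4 + c₃ * 2 ^ (θ * α - 1) * log 3 ^ (θ * α))), c / 4,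
    by positivity, by positivity, fun t ht ht1 => ?_⟩
  rw [show -1 / (θ * α - 1) = (1 - θ * α)⁻¹ by rw [← neg_sub, div_neg, neg_div, neg_neg, one_div]]
  set Y := t ^ (1 - θ * α)⁻¹
  have hL :
      m * exp (c * Y) ≤ c₁ * max (sInf {s | 0 ≤ s ∧ log (2 + s) ^ (1 - θ * α) ≤ c₂ * t}) 2 :=
    calc m * exp (c * Y) ≤ c₁ / 2 * exp ((c₂ * t) ^ (1 - θ * α)⁻¹) := by
          rw [mul_rpow hc₂.le ht.le]
          gcongr
          exact min_le_left _ _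
      _ ≤ _ := by
          rw [div_mul_comm, mul_comm]
          gcongr
          exact exp_rpow_div_two_le_max_sInf hE (by positivity)
  have hexp := mul_rpow_add_le_of_mul_rpow_le_half hE (log_nonneg (by norm_num : (1 : ℝ) ≤ 3))
    hc hc₃.le hsmall ht ht1
  calc _ = m * C⁻¹ *
        exp (c / 4 * Y - (log 3 / 4 + c₃ * 2 ^ (θ * α - 1) * log 3 ^ (θ * α))) := by
        rw [sub_eq_add_neg (c / 4 * Y), exp_add]; ring
    _ ≤ m * C⁻¹ *
        exp (c * Y - (1 / 4 * (log 3 + c * Y) + c₃ * t * (log 3 + c * Y) ^ (θ * α))) := by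
        gcongr m * C⁻¹ * exp ?_
        linarith
    _ ≤ _ := mul_exp_le_integral_logIntegrand hp.le (by linarith) (by positivity) (by positivity)
          (min_le_right _ _) (by positivity) hL hC0 hC (by norm_num)

/-- Lower bound for the long-time integral appearing in Example 1.6: with
`f s = (log (2+s))^(-θ)`, `g s = (log (2+s))^(1-θα)`, `g⁻¹ t = inf {s ≥ 0 : g s ≤ t}`
and `s₁ t = max (g⁻¹ t) 2`, for all `c₁, c₂, c₃ > 0` there are `c₆, c₇ > 0` such that
for all `t ∈ (0,1]`,
`∫₀^{c₁ s₁(c₂ t)} (log (2+s))^(-θ(d-1)) * exp (-c₃ t (log (2+s))^(θα)) ds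
  ≥ c₆ * exp (c₇ * t^(-1/(θα-1)))`. -/
theorem stmt9 (α θ : ℝ) (d : ℕ) (hα0 : 0 < α) (hα2 : α < 2) (hθ : 1 / α < θ)
    (hd : 2 ≤ d)
    (f g ginv s₁ : ℝ → ℝ)
    (hf : ∀ s : ℝ, f s = Real.log (2 + s) ^ (-θ))
    (hg : ∀ s : ℝ, g s = Real.log (2 + s) ^ (1 - θ * α))
    (hginv : ∀ t : ℝ, ginv t = sInf {s : ℝ | 0 ≤ s ∧ g s ≤ t})
    (hs₁ : ∀ t : ℝ, s₁ t = max (ginv t) 2)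
    (c₁ c₂ c₃ : ℝ) (hc₁ : 0 < c₁) (hc₂ : 0 < c₂) (hc₃ : 0 < c₃) :
    ∃ c₆ c₇ : ℝ, 0 < c₆ ∧ 0 < c₇ ∧ ∀ t : ℝ, 0 < t → t ≤ 1 →
      c₆ * Real.exp (c₇ * t ^ (-1 / (θ * α - 1))) ≤
        ∫ s in (0:ℝ)..(c₁ * s₁ (c₂ * t)),
          Real.log (2 + s) ^ (-(θ * ((d : ℝ) - 1))) *
            Real.exp (-(c₃ * t * Real.log (2 + s) ^ (θ * α))) :=
  stmt9_general α θ d hα0 hθ hd g ginv s₁ hg hginv hs₁ c₁ c₂ c₃ hc₁ hc₂ hc₃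
end

section
/- Let α ∈ (0,2) and θ > 0. With f(s) := (1+s)^{−θ}, g(s) := f(s)^α·log(2+s) = (1+s)^{−θα}·log(2+s), and s₁(t) := max(inf{s ≥ 0 : g(s) ≤ t}, 2), there exist constants c₁, c₂ > 0 such that for all t ∈ (0,1]: c₁·t^{−1/(θα)}·(log(1+t^{−1}))^{1/(θα)} ≤ s₁(t) ≤ c₂·t^{−1/(θα)}·(log(1+t^{−1}))^{1/(θα)}. -/
/-!
Put `β = θα` and `L = log (1 + t⁻¹)`. For `s ≥ 0`, `g s ≤ t` means `log (2 + s) ≤ t (1 + s)^β`,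
and `φ = t^(-1/β) L^(1/β)` is the point where `t φ^β = L`; so it suffices that `log (2 + s) ≍ L`
for `s ≍ φ`. Lower bound: any `s` in the sublevel set has `log 2 ≤ t (1 + s)^β`, so
`1 + t⁻¹ ≲ (2 + s)^β`, whence `L ≲ log (2 + s) ≤ t (1 + s)^β`, i.e. `1 + s ≳ φ`. Upper bound:
`φ ≤ t^(-2/β)` gives `log (2 + Bφ) ≤ log B + log 3 + (2/β) L`, which is at most `B^β L = t (Bφ)^β`
once `B` is large, because `log B = o(B^β)` and `L ≥ log 2`.
-/

open Real Filter Asymptotics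

noncomputable def scale (β t : ℝ) : ℝ := t ^ (-1 / β) * log (1 + t⁻¹) ^ (1 / β)

def sublevelSet (β t : ℝ) : Set ℝ := {s | 0 ≤ s ∧ log (2 + s) ≤ t * (1 + s) ^ β}

lemma rpow_neg_rpow_mul_log_le_iff {θ α s t : ℝ} (hs : 0 ≤ s) :
    ((1 + s) ^ (-θ)) ^ α * log (2 + s) ≤ t ↔ log (2 + s) ≤ t * (1 + s) ^ (θ * α) := by
  have h1 : 0 < 1 + s := by linarith
  rw [← rpow_mul h1.le, neg_mul, rpow_neg h1.le, inv_mul_le_iff₀ (rpow_pos_of_pos h1 _),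
    mul_comm]

lemma log_two_le_log_one_add_inv {t : ℝ} (ht0 : 0 < t) (ht1 : t ≤ 1) :
    log 2 ≤ log (1 + t⁻¹) :=
  log_le_log two_pos (by linarith [(one_le_inv₀ ht0).2 ht1])

lemma log_inv_le_log_one_add_inv {t : ℝ} (ht : 0 < t) : log t⁻¹ ≤ log (1 + t⁻¹) :=
  log_le_log (inv_pos.2 ht) (by linarith)

lemma log_one_add_inv_le_inv {t : ℝ} (ht : 0 < t) : log (1 + t⁻¹) ≤ t⁻¹ := by
  linarith [log_le_sub_one_of_pos (x := 1 + t⁻¹) (by positivity)]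

lemma log_one_add_inv_nonneg {t : ℝ} (ht : 0 < t) : 0 ≤ log (1 + t⁻¹) :=
  log_nonneg (by linarith [inv_pos.2 ht])

lemma one_le_rpow_neg_div {t a β : ℝ} (ht0 : 0 < t) (ht1 : t ≤ 1) (ha : 0 ≤ a) (hβ : 0 < β) :
    1 ≤ t ^ (-a / β) :=
  one_le_rpow_of_pos_of_le_one_of_nonpos ht0 ht1
    (div_nonpos_of_nonpos_of_nonneg (neg_nonpos.2 ha) hβ.le)

lemma scale_nonneg (β : ℝ) {t : ℝ} (ht : 0 < t) : 0 ≤ scale β t :=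
  mul_nonneg (rpow_nonneg ht.le _) (rpow_nonneg (log_one_add_inv_nonneg ht) _)

lemma mul_mul_scale_rpow {β t c : ℝ} (hβ : 0 < β) (ht : 0 < t) (hc : 0 ≤ c) :
    t * (c * scale β t) ^ β = c ^ β * log (1 + t⁻¹) := by
  have hL := log_one_add_inv_nonneg ht
  rw [mul_rpow hc (scale_nonneg β ht), scale, mul_rpow (rpow_nonneg ht.le _)
    (rpow_nonneg hL _), ← rpow_mul ht.le, ← rpow_mul hL, div_mul_cancel₀ _ hβ.ne',
    div_mul_cancel₀ _ hβ.ne', rpow_neg_one, rpow_one]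
  field_simp

lemma log_two_rpow_le_scale {β t : ℝ} (hβ : 0 < β) (ht0 : 0 < t) (ht1 : t ≤ 1) :
    log 2 ^ (1 / β) ≤ scale β t := by
  have hL := rpow_le_rpow (log_nonneg one_le_two) (log_two_le_log_one_add_inv ht0 ht1)
    (one_div_pos.2 hβ).le
  exact hL.trans (le_mul_of_one_le_left (rpow_nonneg (log_one_add_inv_nonneg ht0) _)
    (one_le_rpow_neg_div ht0 ht1 zero_le_one hβ))

lemma scale_le_rpow {β t : ℝ} (hβ : 0 < β) (ht : 0 < t) : scale β t ≤ t ^ (-2 / β) := by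
  have hL : log (1 + t⁻¹) ^ (1 / β) ≤ t ^ (-1 / β) := by
    rw [neg_div, rpow_neg ht.le, ← inv_rpow ht.le]
    exact rpow_le_rpow (log_one_add_inv_nonneg ht) (log_one_add_inv_le_inv ht) (by positivity)
  calc scale β t ≤ t ^ (-1 / β) * t ^ (-1 / β) :=
        mul_le_mul_of_nonneg_left hL (rpow_nonneg ht.le _)
    _ = t ^ (-2 / β) := by rw [← rpow_add ht]; ring_nf

lemma log_two_add_mul_scale_le {β t B : ℝ} (hβ : 0 < β) (ht0 : 0 < t) (ht1 : t ≤ 1)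
    (hB : 1 ≤ B) : log (2 + B * scale β t) ≤ log B + log 3 + 2 / β * log (1 + t⁻¹) := by
  have hφ := scale_le_rpow hβ ht0
  have h1 : 1 ≤ t ^ (-2 / β) := one_le_rpow_neg_div ht0 ht1 zero_le_two hβ
  have h2 : 2 + B * scale β t ≤ B * (3 * t ^ (-2 / β)) := by
    nlinarith [mul_le_mul_of_nonneg_left hφ (zero_le_one.trans hB)]
  calc log (2 + B * scale β t) ≤ log (B * (3 * t ^ (-2 / β))) :=
        log_le_log (by linarith [mul_nonneg (zero_le_one.trans hB) (scale_nonneg β ht0)]) h2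
    _ = log B + log 3 + 2 / β * log t⁻¹ := by
        rw [log_mul (by positivity) (by positivity), log_mul (by norm_num) (by positivity),
          log_rpow ht0, log_inv]
        ring
    _ ≤ log B + log 3 + 2 / β * log (1 + t⁻¹) := by
        have := mul_le_mul_of_nonneg_left (log_inv_le_log_one_add_inv ht0)
          (div_pos two_pos hβ).le
        linarith

lemma exists_mul_log_add_le_rpow {β : ℝ} (hβ : 0 < β) (a b : ℝ) :
    ∃ B, 1 ≤ B ∧ a * log B + b ≤ B ^ β := by
  have hb : (fun _ : ℝ => b) =o[atTop] fun x => x ^ β :=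
    isLittleO_const_left.2 (Or.inr (tendsto_norm_atTop_atTop.comp (tendsto_rpow_atTop hβ)))
  have ho : (fun x => a * log x + b) =o[atTop] fun x => x ^ β :=
    ((isLittleO_log_rpow_atTop hβ).const_mul_left a).add hb
  obtain ⟨B, hB, hB1⟩ := ((ho.bound one_pos).and (eventually_ge_atTop 1)).exists
  refine ⟨B, hB1, ?_⟩
  rw [one_mul, norm_of_nonneg (rpow_nonneg (zero_le_one.trans hB1) _)] at hB
  exact (le_abs_self _).trans hB

/-- The constant comes from `1 + t⁻¹ ≤ (1 + (log 2)⁻¹) (2 + s)^β` and `log 2 ≤ log (2 + s)`. -/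
lemma log_one_add_inv_le_mul_log {β t s : ℝ} (hβ : 0 < β) (ht : 0 < t)
    (hs : s ∈ sublevelSet β t) :
    log (1 + t⁻¹) ≤ (log (1 + (log 2)⁻¹) / log 2 + β) * log (2 + s) := by
  obtain ⟨hs0, hst⟩ := hs
  have hl2 : 0 < log 2 := log_pos one_lt_two
  have hlog2s : log 2 ≤ log (2 + s) := log_le_log two_pos (by linarith)
  have hinv : t⁻¹ ≤ (log 2)⁻¹ * (1 + s) ^ β := by
    rw [← div_eq_inv_mul, le_div_iff₀ hl2, inv_mul_le_iff₀ ht]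
    exact hlog2s.trans hst
  have hpow : (1 + s) ^ β ≤ (2 + s) ^ β := rpow_le_rpow (by linarith) (by linarith) hβ.le
  have hone : 1 ≤ (2 + s) ^ β := one_le_rpow (by linarith) hβ.le
  have hK : 1 + t⁻¹ ≤ (1 + (log 2)⁻¹) * (2 + s) ^ β := by
    nlinarith [mul_le_mul_of_nonneg_left hpow (inv_nonneg.2 hl2.le)]
  have hconst : log (1 + (log 2)⁻¹) ≤ log (1 + (log 2)⁻¹) / log 2 * log (2 + s) := by
    rw [div_mul_eq_mul_div, le_div_iff₀ hl2]
    exact mul_le_mul_of_nonneg_left hlog2s (log_nonneg (by linarith [inv_pos.2 hl2]))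
  calc log (1 + t⁻¹) ≤ log ((1 + (log 2)⁻¹) * (2 + s) ^ β) :=
        log_le_log (by positivity) hK
    _ = log (1 + (log 2)⁻¹) + β * log (2 + s) := by
        rw [log_mul (by positivity) (by positivity), log_rpow (by linarith)]
    _ ≤ _ := by linarith

lemma exists_mul_scale_le_one_add_of_mem {β : ℝ} (hβ : 0 < β) :
    ∃ c, 0 < c ∧ ∀ t, 0 < t → ∀ s ∈ sublevelSet β t, c * scale β t ≤ 1 + s := by
  set C := log (1 + (log 2)⁻¹) / log 2 + β
  have hC : 0 < C := by
    have : 0 ≤ log (1 + (log 2)⁻¹) / log 2 :=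
      div_nonneg (log_nonneg (by linarith [inv_pos.2 (log_pos one_lt_two)]))
        (log_nonneg one_le_two)
    positivity
  refine ⟨C⁻¹ ^ β⁻¹, by positivity, fun t ht s hs => ?_⟩
  have hc : 0 ≤ C⁻¹ ^ β⁻¹ := by positivity
  refine (rpow_le_rpow_iff (mul_nonneg hc (scale_nonneg β ht)) (by linarith [hs.1]) hβ).1
    (le_of_mul_le_mul_left ?_ ht)
  rw [mul_mul_scale_rpow hβ ht hc, rpow_inv_rpow (inv_nonneg.2 hC.le) hβ.ne',
    inv_mul_le_iff₀ hC]
  exact (log_one_add_inv_le_mul_log hβ ht hs).trans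
    (mul_le_mul_of_nonneg_left hs.2 hC.le)

lemma exists_mul_scale_mem_sublevelSet {β : ℝ} (hβ : 0 < β) :
    ∃ B, 0 < B ∧ ∀ t, 0 < t → t ≤ 1 → B * scale β t ∈ sublevelSet β t := by
  obtain ⟨B, hB1, hB⟩ :=
    exists_mul_log_add_le_rpow hβ (log 2)⁻¹ (log 3 / log 2 + 2 / β)
  refine ⟨B, zero_lt_one.trans_le hB1, fun t ht0 ht1 => ?_⟩
  have hl2 : 0 < log 2 := log_pos one_lt_two
  have hL2 := log_two_le_log_one_add_inv ht0 ht1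
  have hφ := scale_nonneg β ht0
  have hB0 : 0 ≤ B := zero_le_one.trans hB1
  have hnum : 0 ≤ log B + log 3 := add_nonneg (log_nonneg hB1) (log_nonneg (by norm_num))
  have hcoef : (log B + log 3) / log 2 + 2 / β ≤ B ^ β := by
    convert hB using 1
    ring
  refine ⟨mul_nonneg hB0 hφ, ?_⟩
  calc log (2 + B * scale β t) ≤ log B + log 3 + 2 / β * log (1 + t⁻¹) :=
        log_two_add_mul_scale_le hβ ht0 ht1 hB1
    _ ≤ ((log B + log 3) / log 2 + 2 / β) * log (1 + t⁻¹) := by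
        have : log B + log 3 ≤ (log B + log 3) / log 2 * log (1 + t⁻¹) := by
          rw [div_mul_eq_mul_div, le_div_iff₀ hl2]
          exact mul_le_mul_of_nonneg_left hL2 hnum
        linarith
    _ ≤ B ^ β * log (1 + t⁻¹) := mul_le_mul_of_nonneg_right hcoef (hl2.le.trans hL2)
    _ = t * (B * scale β t) ^ β := (mul_mul_scale_rpow hβ ht0 hB0).symm
    _ ≤ t * (1 + B * scale β t) ^ β := by
        gcongr
        linarith

theorem stmt11_general (α θ : ℝ) (hα0 : 0 < α) (hθ : 0 < θ)
    (f g s₁ : ℝ → ℝ)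
    (hf : ∀ s : ℝ, f s = (1 + s) ^ (-θ))
    (hg : ∀ s : ℝ, g s = f s ^ α * Real.log (2 + s))
    (hs₁ : ∀ t : ℝ, s₁ t = max (sInf {s : ℝ | 0 ≤ s ∧ g s ≤ t}) 2) :
    ∃ c₁ c₂ : ℝ, 0 < c₁ ∧ 0 < c₂ ∧ ∀ t : ℝ, 0 < t → t ≤ 1 →
      c₁ * (t ^ (-1 / (θ * α)) * Real.log (1 + t⁻¹) ^ (1 / (θ * α))) ≤ s₁ t ∧
      s₁ t ≤ c₂ * (t ^ (-1 / (θ * α)) * Real.log (1 + t⁻¹) ^ (1 / (θ * α))) := by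
  set β := θ * α
  have hβ : 0 < β := mul_pos hθ hα0
  obtain ⟨B, hB, hmem⟩ := exists_mul_scale_mem_sublevelSet hβ
  obtain ⟨c, hc, hlower⟩ := exists_mul_scale_le_one_add_of_mem hβ
  have hl2 : 0 < log 2 ^ (1 / β) := rpow_pos_of_pos (log_pos one_lt_two) _
  refine ⟨c / 2, B + 2 / log 2 ^ (1 / β), by positivity, by positivity, fun t ht0 ht1 => ?_⟩
  have hset : {s : ℝ | 0 ≤ s ∧ g s ≤ t} = sublevelSet β t := by
    ext s
    simp only [Set.mem_ofPred_eq, sublevelSet, hg, hf]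
    exact and_congr_right rpow_neg_rpow_mul_log_le_iff
  change c / 2 * scale β t ≤ s₁ t ∧ s₁ t ≤ (B + 2 / log 2 ^ (1 / β)) * scale β t
  rw [hs₁, hset, add_mul]
  have hinf_le : sInf (sublevelSet β t) ≤ B * scale β t :=
    csInf_le ⟨0, fun _ hs => hs.1⟩ (hmem t ht0 ht1)
  have hinf_ge : c * scale β t - 1 ≤ sInf (sublevelSet β t) :=
    le_csInf ⟨_, hmem t ht0 ht1⟩ fun s hs => by linarith [hlower t ht0 s hs]
  have htwo : 2 ≤ 2 / log 2 ^ (1 / β) * scale β t := by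
    rw [div_mul_eq_mul_div, le_div_iff₀ hl2]
    linarith [log_two_rpow_le_scale hβ ht0 ht1]
  have hBφ : 0 ≤ B * scale β t := mul_nonneg hB.le (scale_nonneg β ht0)
  constructor
  · rcases le_total (c * scale β t) 2 with h | h
    · exact le_max_of_le_right (by linarith)
    · exact le_max_of_le_left (by linarith)
  · exact max_le (by linarith) (by linarith)

/-- For `f s = (1+s)^(-θ)`, `g s = f s ^ α * log (2+s)` and
`s₁ t = max (inf {s ≥ 0 : g s ≤ t}) 2`, there are constants `c₁, c₂ > 0` with
`c₁ * t^(-1/(θα)) * (log (1+t⁻¹))^(1/(θα)) ≤ s₁ t ≤ c₂ * t^(-1/(θα)) * (log (1+t⁻¹))^(1/(θα))`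
for all `t ∈ (0,1]`. -/
theorem stmt11 (α θ : ℝ) (hα0 : 0 < α) (hα2 : α < 2) (hθ : 0 < θ)
    (f g s₁ : ℝ → ℝ)
    (hf : ∀ s : ℝ, f s = (1 + s) ^ (-θ))
    (hg : ∀ s : ℝ, g s = f s ^ α * Real.log (2 + s))
    (hs₁ : ∀ t : ℝ, s₁ t = max (sInf {s : ℝ | 0 ≤ s ∧ g s ≤ t}) 2) :
    ∃ c₁ c₂ : ℝ, 0 < c₁ ∧ 0 < c₂ ∧ ∀ t : ℝ, 0 < t → t ≤ 1 →
      c₁ * (t ^ (-1 / (θ * α)) * Real.log (1 + t⁻¹) ^ (1 / (θ * α))) ≤ s₁ t ∧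
      s₁ t ≤ c₂ * (t ^ (-1 / (θ * α)) * Real.log (1 + t⁻¹) ^ (1 / (θ * α))) :=
  stmt11_general α θ hα0 hθ f g s₁ hf hg hs₁
end

section
/- Let α ∈ (0,2), θ > 0 and let d ≥ 2 be an integer. With f(s) := (1+s)^{−θ}, s₀(t) := max(inf{s > 0 : f(s)^α ≤ t}, 2), s₁(t) := max(inf{s ≥ 0 : f(s)^α·log(2+s) ≤ t}, 2), and F(t) := t^{−(1−θ(d−1))/(θα)} if θ(d−1) < 1, F(t) := 1 if θ(d−1) > 1, F(t) := log(1+t^{−1}) if θ(d−1) = 1, the following holds: for all c₁, c₂, c₃ > 0 there exists c₄ > 0 such that for all t ∈ (0,1], ∫_{c₁·s₀(t)}^{c₂·s₁(t)} (1+s)^{−θ(d−1)}·exp(−c₃·t·(1+s)^{θα}) ds ≤ c₄·F(t), where the integral is taken to be 0 when c₂·s₁(t) ≤ c₁·s₀(t). -/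
open MeasureTheory Real

/-!
Bounding `e^{-x} ≤ n! x^{-n}` with `n` large turns the integrand into a multiple of
`(c t)^{-n} s^{-r}` with `r = θ(d-1) + θαn > 1`. Integrating from `c₁ s₀(t) ≳ t^{-1/(θα)}` to `∞`
gives `t^{-n} · t^{(r-1)/(θα)} = t^{(θ(d-1)-1)/(θα)}`, which is at most a constant times `F(t)` in
each of the three regimes.
-/

lemma exp_neg_le_factorial_mul_rpow_neg (n : ℕ) {x : ℝ} (hx : 0 < x) :
    exp (-x) ≤ n.factorial * x ^ (-(n : ℝ)) := by
  have hpos : 0 < x ^ n / n.factorial := by positivity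
  calc exp (-x) = (exp x)⁻¹ := exp_neg x
    _ ≤ (x ^ n / n.factorial)⁻¹ := inv_anti₀ hpos (pow_div_factorial_le_exp (x := x) hx.le n)
    _ = n.factorial * x ^ (-(n : ℝ)) := by
      rw [rpow_neg hx.le, rpow_natCast, inv_div, div_eq_mul_inv]

lemma setIntegral_Ioc_rpow_neg_le {r : ℝ} (hr : 1 < r) {a : ℝ} (ha : 0 < a) (b : ℝ) :
    ∫ s in Set.Ioc a b, s ^ (-r) ≤ a ^ (1 - r) / (r - 1) := by
  have hr' : -r < -1 := by linarith
  calc ∫ s in Set.Ioc a b, s ^ (-r)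
      ≤ ∫ s in Set.Ioi a, s ^ (-r) := by
        refine setIntegral_mono_set (integrableOn_Ioi_rpow_of_lt hr' ha) ?_
          Set.Ioc_subset_Ioi_self.eventuallyLE
        filter_upwards [ae_restrict_mem measurableSet_Ioi] with s hs
        exact rpow_nonneg (ha.trans hs).le _
    _ = a ^ (1 - r) / (r - 1) := by
      rw [integral_Ioi_rpow_of_lt hr' ha, neg_add_eq_sub, ← neg_sub r 1, div_neg, neg_div,
        neg_neg]

section Integrand

variable {p q c : ℝ} (n : ℕ)

lemma one_add_rpow_neg_mul_exp_le (hc : 0 < c) (hr : 0 ≤ p + q * n) {s : ℝ} (hs : 0 < s) :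
    (1 + s) ^ (-p) * exp (-(c * (1 + s) ^ q)) ≤
      n.factorial * c ^ (-(n : ℝ)) * s ^ (-(p + q * n)) := by
  have h1s : 0 < 1 + s := by linarith
  calc (1 + s) ^ (-p) * exp (-(c * (1 + s) ^ q))
      ≤ (1 + s) ^ (-p) * (n.factorial * (c * (1 + s) ^ q) ^ (-(n : ℝ))) :=
        mul_le_mul_of_nonneg_left (exp_neg_le_factorial_mul_rpow_neg n (by positivity))
          (by positivity)
    _ = n.factorial * c ^ (-(n : ℝ)) * (1 + s) ^ (-(p + q * n)) := by
      rw [mul_rpow hc.le (by positivity), ← rpow_mul h1s.le, neg_add, rpow_add h1s,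
        mul_neg, neg_mul_eq_mul_neg q]
      ring
    _ ≤ n.factorial * c ^ (-(n : ℝ)) * s ^ (-(p + q * n)) :=
      mul_le_mul_of_nonneg_left (rpow_le_rpow_of_nonpos hs (by linarith) (by linarith))
        (by positivity)

lemma setIntegral_one_add_rpow_neg_mul_exp_le (hc : 0 < c) (hr : 1 < p + q * n) {a : ℝ}
    (ha : 0 < a) (b : ℝ) :
    ∫ s in Set.Ioc a b, (1 + s) ^ (-p) * exp (-(c * (1 + s) ^ q)) ≤
      n.factorial * c ^ (-(n : ℝ)) * (a ^ (1 - (p + q * n)) / (p + q * n - 1)) := by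
  have hmajorant : IntegrableOn (fun s ↦ s ^ (-(p + q * n))) (Set.Ioc a b) :=
    (integrableOn_Ioi_rpow_of_lt (by linarith) ha).mono_set Set.Ioc_subset_Ioi_self
  calc ∫ s in Set.Ioc a b, (1 + s) ^ (-p) * exp (-(c * (1 + s) ^ q))
      ≤ ∫ s in Set.Ioc a b, n.factorial * c ^ (-(n : ℝ)) * s ^ (-(p + q * n)) := by
        refine integral_mono_of_nonneg ?_ (hmajorant.const_mul _) ?_
        · filter_upwards [ae_restrict_mem measurableSet_Ioc] with s hs
          have : 0 < 1 + s := by linarith [ha.trans hs.1]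
          positivity
        · filter_upwards [ae_restrict_mem measurableSet_Ioc] with s hs
          exact one_add_rpow_neg_mul_exp_le n hc (by linarith) (ha.trans hs.1)
    _ = n.factorial * c ^ (-(n : ℝ)) * ∫ s in Set.Ioc a b, s ^ (-(p + q * n)) :=
        integral_const_mul _ _
    _ ≤ _ := by gcongr; exact setIntegral_Ioc_rpow_neg_le hr ha b

end Integrand

lemma rpow_neg_inv_le_of_rpow_neg_le {q t x : ℝ} (hq : 0 < q) (hx : 0 < x) (h : x ^ (-q) ≤ t) :
    t ^ (-q⁻¹) ≤ x := by
  calc t ^ (-q⁻¹) ≤ (x ^ (-q)) ^ (-q⁻¹) :=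
        rpow_le_rpow_of_nonpos (rpow_pos_of_pos hx _) h (by simp [hq.le])
    _ = x := by rw [← rpow_mul hx.le, neg_mul_neg, mul_inv_cancel₀ hq.ne', rpow_one]

lemma rpow_neg_inv_sub_one_le_sInf {q t : ℝ} (hq : 0 < q) (ht : 0 < t) :
    t ^ (-q⁻¹) - 1 ≤ sInf {s : ℝ | 0 < s ∧ (1 + s) ^ (-q) ≤ t} := by
  set T := t ^ (-q⁻¹)
  have hT : 0 < T := rpow_pos_of_pos ht _
  refine le_csInf ⟨T, hT, ?_⟩ fun s ⟨hs, hst⟩ ↦ ?_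
  · calc (1 + T) ^ (-q) ≤ T ^ (-q) := rpow_le_rpow_of_nonpos hT (by linarith) (by linarith)
      _ = t := by rw [← rpow_mul ht.le, neg_mul_neg, inv_mul_cancel₀ hq.ne', rpow_one]
  · linarith [rpow_neg_inv_le_of_rpow_neg_le hq (by linarith) hst]

lemma two_thirds_mul_rpow_neg_inv_le_max_sInf {q t : ℝ} (hq : 0 < q) (ht : 0 < t) :
    2 / 3 * t ^ (-q⁻¹) ≤ max (sInf {s : ℝ | 0 < s ∧ (1 + s) ^ (-q) ≤ t}) 2 := by
  linarith [rpow_neg_inv_sub_one_le_sInf hq ht,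
    le_max_left (sInf {s : ℝ | 0 < s ∧ (1 + s) ^ (-q) ≤ t}) 2,
    le_max_right (sInf {s : ℝ | 0 < s ∧ (1 + s) ^ (-q) ≤ t}) 2]

noncomputable def middleRangeProfile (p q t : ℝ) : ℝ :=
  if p < 1 then t ^ (-(1 - p) / q) else if 1 < p then 1 else log (1 + t⁻¹)

lemma rpow_le_inv_log_two_mul_middleRangeProfile {p q t : ℝ} (hq : 0 < q) (ht : 0 < t)
    (ht1 : t ≤ 1) : t ^ ((p - 1) / q) ≤ (log 2)⁻¹ * middleRangeProfile p q t := by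
  have hlog2 : 0 < log 2 := log_pos one_lt_two
  have hinv : 1 ≤ (log 2)⁻¹ := (one_le_inv₀ hlog2).mpr (by linarith [log_two_lt_d9])
  unfold middleRangeProfile
  rcases lt_trichotomy p 1 with hp | rfl | hp
  · rw [if_pos hp, neg_sub]
    exact le_mul_of_one_le_left (rpow_nonneg ht.le _) hinv
  · rw [if_neg (lt_irrefl 1), if_neg (lt_irrefl 1), sub_self, zero_div, rpow_zero,
      inv_mul_eq_div, le_div_iff₀ hlog2, one_mul]
    exact log_le_log two_pos (by linarith [one_le_inv₀ ht |>.mpr ht1])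
  · rw [if_neg hp.not_gt, if_pos hp, mul_one]
    exact (rpow_le_one ht.le ht1 (div_nonneg (by linarith) hq.le)).trans hinv

lemma rpow_neg_mul_rpow_le {p q c m t a : ℝ} (n : ℕ) (hq : 0 < q) (hr : 1 < p + q * n)
    (hc : 0 < c) (hm : 0 < m) (ht : 0 < t) (ha : m * t ^ (-q⁻¹) ≤ a) :
    (c * t) ^ (-(n : ℝ)) * a ^ (1 - (p + q * n)) ≤
      c ^ (-(n : ℝ)) * m ^ (1 - (p + q * n)) * t ^ ((p - 1) / q) := by
  calc (c * t) ^ (-(n : ℝ)) * a ^ (1 - (p + q * n))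
      ≤ (c * t) ^ (-(n : ℝ)) * (m * t ^ (-q⁻¹)) ^ (1 - (p + q * n)) :=
        mul_le_mul_of_nonneg_left (rpow_le_rpow_of_nonpos (by positivity) ha (by linarith))
          (by positivity)
    _ = c ^ (-(n : ℝ)) * m ^ (1 - (p + q * n)) * t ^ (-(n : ℝ) + -q⁻¹ * (1 - (p + q * n))) := by
        rw [mul_rpow hc.le ht.le, mul_rpow hm.le (by positivity), ← rpow_mul ht.le,
          rpow_add ht]
        ring
    _ = c ^ (-(n : ℝ)) * m ^ (1 - (p + q * n)) * t ^ ((p - 1) / q) := by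
        congr 2
        field_simp
        ring

lemma setIntegral_one_add_rpow_neg_mul_exp_le_rpow {p q c m t a : ℝ} (n : ℕ) (hq : 0 < q)
    (hr : 1 < p + q * n) (hc : 0 < c) (hm : 0 < m) (ht : 0 < t) (ha : m * t ^ (-q⁻¹) ≤ a)
    (b : ℝ) :
    ∫ s in Set.Ioc a b, (1 + s) ^ (-p) * exp (-(c * t * (1 + s) ^ q)) ≤
      n.factorial * c ^ (-(n : ℝ)) * m ^ (1 - (p + q * n)) / (p + q * n - 1) *
        t ^ ((p - 1) / q) := by
  have ha0 : 0 < a := (by positivity : 0 < m * t ^ (-q⁻¹)).trans_le ha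
  calc _ ≤ n.factorial * (c * t) ^ (-(n : ℝ)) * (a ^ (1 - (p + q * n)) / (p + q * n - 1)) :=
        setIntegral_one_add_rpow_neg_mul_exp_le n (mul_pos hc ht) hr ha0 b
    _ = n.factorial / (p + q * n - 1) * ((c * t) ^ (-(n : ℝ)) * a ^ (1 - (p + q * n))) := by
        ring
    _ ≤ n.factorial / (p + q * n - 1) *
          (c ^ (-(n : ℝ)) * m ^ (1 - (p + q * n)) * t ^ ((p - 1) / q)) :=
        mul_le_mul_of_nonneg_left (rpow_neg_mul_rpow_le n hq hr hc hm ht ha)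
          (div_nonneg (by positivity) (by linarith))
    _ = _ := by ring

theorem stmt13_general (α θ : ℝ) (d : ℕ) (hα0 : 0 < α) (hθ : 0 < θ)
    (f s₀ s₁ F : ℝ → ℝ)
    (hf : ∀ s : ℝ, f s = (1 + s) ^ (-θ))
    (hs₀ : ∀ t : ℝ, s₀ t = max (sInf {s : ℝ | 0 < s ∧ f s ^ α ≤ t}) 2)
    (hF : ∀ t : ℝ, F t =
      if θ * ((d : ℝ) - 1) < 1 then t ^ (-(1 - θ * ((d : ℝ) - 1)) / (θ * α))
      else if 1 < θ * ((d : ℝ) - 1) then 1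
      else Real.log (1 + t⁻¹))
    (c₁ c₂ c₃ : ℝ) (hc₁ : 0 < c₁) (hc₃ : 0 < c₃) :
    ∃ c₄ : ℝ, 0 < c₄ ∧ ∀ t : ℝ, 0 < t → t ≤ 1 →
      (∫ s in Set.Ioc (c₁ * s₀ t) (c₂ * s₁ t),
          (1 + s) ^ (-(θ * ((d : ℝ) - 1))) *
            Real.exp (-(c₃ * t * (1 + s) ^ (θ * α)))) ≤ c₄ * F t := by
  set p := θ * ((d : ℝ) - 1)
  set q := θ * α
  have hq : 0 < q := mul_pos hθ hα0
  obtain ⟨n, hn⟩ := exists_nat_gt ((1 - p) / q)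
  have hr : 1 < p + q * n := by linarith [(div_lt_iff₀ hq).mp hn]
  set K := n.factorial * c₃ ^ (-(n : ℝ)) * (c₁ * (2 / 3)) ^ (1 - (p + q * n)) / (p + q * n - 1)
  have hK : 0 < K := div_pos (by positivity) (by linarith)
  refine ⟨K * (log 2)⁻¹, mul_pos hK (inv_pos.mpr (log_pos one_lt_two)), fun t ht ht1 ↦ ?_⟩
  have hfα : {s : ℝ | 0 < s ∧ f s ^ α ≤ t} = {s : ℝ | 0 < s ∧ (1 + s) ^ (-q) ≤ t} := by
    ext s
    refine and_congr_right fun hs ↦ ?_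
    rw [hf, ← rpow_mul (by linarith), neg_mul]
  have ha : c₁ * (2 / 3) * t ^ (-q⁻¹) ≤ c₁ * s₀ t := by
    rw [mul_assoc, hs₀, hfα]
    exact mul_le_mul_of_nonneg_left (two_thirds_mul_rpow_neg_inv_le_max_sInf hq ht) hc₁.le
  calc _ ≤ K * t ^ ((p - 1) / q) :=
        setIntegral_one_add_rpow_neg_mul_exp_le_rpow n hq hr hc₃ (by positivity) ht ha _
    _ ≤ K * ((log 2)⁻¹ * F t) := by
        rw [hF]
        exact mul_le_mul_of_nonneg_left
          (rpow_le_inv_log_two_mul_middleRangeProfile hq ht ht1) hK.le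
    _ = K * (log 2)⁻¹ * F t := by ring

/-- For `f s = (1+s)^(-θ)` (so `f s ^(-α) = (1+s)^(θα)`),
`s₀ t = max (inf {s > 0 : f s ^ α ≤ t}) 2`,
`s₁ t = max (inf {s ≥ 0 : f s ^ α * log (2+s) ≤ t}) 2`, and the profile `F` of
Example 6.1, for all `c₁, c₂, c₃ > 0` there is `c₄ > 0` such that for all `t ∈ (0,1]`,
`∫_{c₁ s₀ t}^{c₂ s₁ t} (1+s)^(-θ(d-1)) * exp (-c₃ t (1+s)^(θα)) ds ≤ c₄ * F t`,
the integral (over the interval `Ioc (c₁ s₀ t) (c₂ s₁ t)`) being `0` when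
`c₂ s₁ t ≤ c₁ s₀ t`. -/
theorem stmt13 (α θ : ℝ) (d : ℕ) (hα0 : 0 < α) (hα2 : α < 2) (hθ : 0 < θ)
    (hd : 2 ≤ d)
    (f s₀ s₁ F : ℝ → ℝ)
    (hf : ∀ s : ℝ, f s = (1 + s) ^ (-θ))
    (hs₀ : ∀ t : ℝ, s₀ t = max (sInf {s : ℝ | 0 < s ∧ f s ^ α ≤ t}) 2)
    (hs₁ : ∀ t : ℝ, s₁ t =
      max (sInf {s : ℝ | 0 ≤ s ∧ f s ^ α * Real.log (2 + s) ≤ t}) 2)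
    (hF : ∀ t : ℝ, F t =
      if θ * ((d : ℝ) - 1) < 1 then t ^ (-(1 - θ * ((d : ℝ) - 1)) / (θ * α))
      else if 1 < θ * ((d : ℝ) - 1) then 1
      else Real.log (1 + t⁻¹))
    (c₁ c₂ c₃ : ℝ) (hc₁ : 0 < c₁) (hc₂ : 0 < c₂) (hc₃ : 0 < c₃) :
    ∃ c₄ : ℝ, 0 < c₄ ∧ ∀ t : ℝ, 0 < t → t ≤ 1 →
      (∫ s in Set.Ioc (c₁ * s₀ t) (c₂ * s₁ t),
          (1 + s) ^ (-(θ * ((d : ℝ) - 1))) *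
            Real.exp (-(c₃ * t * (1 + s) ^ (θ * α)))) ≤ c₄ * F t :=
  stmt13_general α θ d hα0 hθ f s₀ s₁ F hf hs₀ hF c₁ c₂ c₃ hc₁ hc₃
end

section
/- Let d ≥ 2 be an integer and α ∈ (0,2). There exists a constant C > 0, depending only on d and α, with the following property: for every a ∈ ℝ, every function f : ℝ → (0, 1/4], every x ∈ D and every r ≥ 1, ∫_{{z ∈ D : |z−x| ≥ r}} |x−z|^{−(d+α)} dz ≤ C·r^{−(d+α−1)}, where D := {z ∈ ℝ^d : z₁ > a and |z̃| < f(z₁)} and points of ℝ^d are written z = (z₁, z̃) with z̃ = (z₂, …, z_d) ∈ ℝ^{d−1}. -/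
/-!
Every point of `D` has transverse part of Euclidean length `< 1/4`, so two points of `D` at
distance `≥ r ≥ 1` differ by at least `r / 2` in the first coordinate. Hence the far part of `D`
lies in the slab `{|z₁ - x₁| ≥ r/2, |zⱼ| < 1/4 for j ≠ 1}`, on which the kernel is at most
`|z₁ - x₁|^(-(d+α))`. By Fubini this integral is a one-dimensional tail of order
`r^(1-d-α)` times the volume of a cube of side `1/2`.
-/

open MeasureTheory Set

lemma lintegral_Ioi_rpow_neg {p R : ℝ} (hp : 1 < p) (hR : 0 < R) :
    ∫⁻ t in Ioi R, ENNReal.ofReal (t ^ (-p)) = ENNReal.ofReal (R ^ (1 - p) / (p - 1)) := by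
  rw [← ofReal_integral_eq_lintegral_ofReal (integrableOn_Ioi_rpow_of_lt (by linarith) hR)
    ((ae_restrict_iff' measurableSet_Ioi).2 (ae_of_all _ fun t ht => by
      have : 0 < t := hR.trans ht
      positivity)),
    integral_Ioi_rpow_of_lt (by linarith) hR, ← neg_div_neg_eq, neg_neg]
  ring_nf

lemma lintegral_abs_rpow_neg_tail {p R : ℝ} (hp : 1 < p) (hR : 0 < R) :
    ∫⁻ t in {t : ℝ | R ≤ |t|}, ENNReal.ofReal (|t| ^ (-p)) =
      ENNReal.ofReal (2 * R ^ (1 - p) / (p - 1)) := by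
  set g : ℝ → ENNReal := fun t => ENNReal.ofReal (|t| ^ (-p))
  have hIci : ∫⁻ t in Ici R, g t = ENNReal.ofReal (R ^ (1 - p) / (p - 1)) := by
    rw [setLIntegral_congr Ioi_ae_eq_Ici.symm, ← lintegral_Ioi_rpow_neg hp hR]
    refine setLIntegral_congr_fun measurableSet_Ioi fun t ht => ?_
    simp only [g, abs_of_pos (hR.trans ht)]
  have hIic : ∫⁻ t in Iic (-R), g t = ∫⁻ t in Ici R, g t := by
    rw [← (Measure.measurePreserving_neg volume).setLIntegral_comp_preimage_emb
      (MeasurableEquiv.neg ℝ).measurableEmbedding]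
    simp only [g, neg_preimage, neg_Iic, neg_neg, abs_neg]
  have hsplit : {t : ℝ | R ≤ |t|} = Iic (-R) ∪ Ici R := by
    ext t
    simp only [mem_ofPred_eq, le_abs', mem_union, mem_Iic, mem_Ici]
  rw [hsplit, lintegral_union measurableSet_Ici
      (Iic_disjoint_Ici.2 (by linarith)), hIic, hIci,
    ← ENNReal.ofReal_add (by positivity) (by positivity)]
  ring_nf

lemma lintegral_abs_sub_rpow_neg_tail {p R : ℝ} (hp : 1 < p) (hR : 0 < R) (c : ℝ) :
    ∫⁻ t in {t : ℝ | R ≤ |t - c|}, ENNReal.ofReal (|t - c| ^ (-p)) =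
      ENNReal.ofReal (2 * R ^ (1 - p) / (p - 1)) := by
  have hS : MeasurableSet {t : ℝ | R ≤ |t|} := measurableSet_le measurable_const measurable_abs
  rw [← lintegral_abs_rpow_neg_tail hp hR, ← lintegral_indicator hS,
    ← lintegral_sub_right_eq_self (μ := volume) _ c]
  exact (lintegral_indicator (hS.preimage (measurable_sub_const c)) _).symm

namespace EuclideanSpace

lemma setLIntegral_comp_apply_eq_mul_volume {n : ℕ} (i0 : Fin (n + 1)) {g : ℝ → ENNReal}
    (hg : Measurable g) (S : Set ℝ) (T : Set (Fin n → ℝ)) :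
    ∫⁻ z in {z : EuclideanSpace ℝ (Fin (n + 1)) |
        z i0 ∈ S ∧ (fun j => z (i0.succAbove j)) ∈ T}, g (z i0) =
      (∫⁻ t in S, g t) * volume T := by
  let φ := (MeasurableEquiv.toLp 2 (Fin (n + 1) → ℝ)).symm
  let e := MeasurableEquiv.piFinSuccAbove (fun _ : Fin (n + 1) => ℝ) i0
  have hφ := volume_preserving_symm_measurableEquiv_toLp (Fin (n + 1))
  have he := volume_preserving_piFinSuccAbove (fun _ : Fin (n + 1) => ℝ) i0
  calc _ = ∫⁻ y in e ⁻¹' (S ×ˢ T), g (y i0) :=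
        hφ.setLIntegral_comp_preimage_emb φ.measurableEmbedding (fun y => g (y i0)) _
    _ = ∫⁻ q in S ×ˢ T, g q.1 :=
        he.setLIntegral_comp_preimage_emb e.measurableEmbedding (fun q => g q.1) _
    _ = (∫⁻ t in S, g t) * volume T := by
        rw [Measure.volume_eq_prod, ← Measure.prod_restrict]
        simpa using lintegral_prod_mul (μ := volume.restrict S) (ν := volume.restrict T)
          hg.aemeasurable (aemeasurable_const (b := (1 : ENNReal)))

lemma setLIntegral_norm_sub_rpow_neg_slab_le {n : ℕ} (i0 : Fin (n + 1))
    (x : EuclideanSpace ℝ (Fin (n + 1))) {p R h : ℝ} (hp : 1 < p) (hR : 0 < R) (hh : 0 < h) :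
    ∫⁻ z in {z : EuclideanSpace ℝ (Fin (n + 1)) |
        R ≤ |z i0 - x i0| ∧ (fun j => z (i0.succAbove j)) ∈ Metric.ball 0 h},
        ENNReal.ofReal (‖x - z‖ ^ (-p)) ≤
      ENNReal.ofReal (2 * R ^ (1 - p) / (p - 1)) * ENNReal.ofReal ((2 * h) ^ n) := by
  have hg : Measurable fun t : ℝ => ENNReal.ofReal (|t - x i0| ^ (-p)) := by fun_prop
  calc _ ≤ ∫⁻ z in {z : EuclideanSpace ℝ (Fin (n + 1)) |
          z i0 ∈ {t | R ≤ |t - x i0|} ∧ (fun j => z (i0.succAbove j)) ∈ Metric.ball 0 h},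
          ENNReal.ofReal (|z i0 - x i0| ^ (-p)) := by
        refine setLIntegral_mono (hg.comp (by fun_prop)) fun z hz => ?_
        refine ENNReal.ofReal_le_ofReal
          (Real.rpow_le_rpow_of_nonpos (hR.trans_le hz.1) ?_ (by linarith))
        rw [abs_sub_comm]
        exact PiLp.norm_apply_le (x - z) i0
    _ = _ := by
        rw [setLIntegral_comp_apply_eq_mul_volume i0 hg, lintegral_abs_sub_rpow_neg_tail hp hR,
          Real.volume_pi_ball _ hh, Fintype.card_fin]

lemma dist_sq_le_sq_sub_apply_add {ι : Type*} [Fintype ι] [DecidableEq ι] (i0 : ι)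
    (x z : EuclideanSpace ℝ ι) :
    dist z x ^ 2 ≤ (z i0 - x i0) ^ 2 + 2 * ∑ i ∈ Finset.univ.erase i0, z i ^ 2 +
      2 * ∑ i ∈ Finset.univ.erase i0, x i ^ 2 := by
  rw [EuclideanSpace.dist_eq, Real.sq_sqrt (by positivity),
    ← Finset.add_sum_erase _ _ (Finset.mem_univ i0), add_assoc, Finset.mul_sum, Finset.mul_sum,
    ← Finset.sum_add_distrib]
  simp only [Real.dist_eq, sq_abs]
  gcongr with i
  nlinarith [sq_nonneg (z i + x i)]

lemma half_le_abs_sub_apply_of_le_dist {ι : Type*} [Fintype ι] [DecidableEq ι]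
    {i0 : ι} {x z : EuclideanSpace ℝ ι} {r : ℝ} (hr : 1 ≤ r)
    (hx : ∑ i ∈ Finset.univ.erase i0, x i ^ 2 < (1 / 4) ^ 2)
    (hz : ∑ i ∈ Finset.univ.erase i0, z i ^ 2 < (1 / 4) ^ 2) (hzx : r ≤ dist z x) :
    r / 2 ≤ |z i0 - x i0| := by
  have hsq : (r / 2) ^ 2 ≤ (z i0 - x i0) ^ 2 := by
    nlinarith [pow_le_pow_left₀ (by linarith) hzx 2, dist_sq_le_sq_sub_apply_add i0 x z]
  simpa [abs_of_pos (by linarith : 0 < r / 2)] using sq_le_sq.1 hsq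

end EuclideanSpace

lemma mem_ball_zero_comp_succAbove_of_sum_erase_sq_lt {n : ℕ} {i0 : Fin (n + 1)}
    {z : Fin (n + 1) → ℝ} {h : ℝ} (hh : 0 < h)
    (hz : ∑ i ∈ Finset.univ.erase i0, z i ^ 2 < h ^ 2) :
    (fun j => z (i0.succAbove j)) ∈ Metric.ball 0 h := by
  rw [mem_ball_zero_iff, pi_norm_lt_iff hh]
  exact fun j => abs_lt_of_sq_lt_sq ((Finset.single_le_sum (fun i _ => sq_nonneg (z i))
    (Finset.mem_erase.2 ⟨Fin.succAbove_ne i0 j, Finset.mem_univ _⟩)).trans_lt hz) hh.le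

theorem stmt16_general (d : ℕ) (hd : 2 ≤ d) (α : ℝ) (hα0 : 0 < α) :
    ∃ C : ℝ, 0 < C ∧
      ∀ (i0 : Fin d), (i0 : ℕ) = 0 →
      ∀ (a : ℝ) (f : ℝ → ℝ), (∀ s : ℝ, 0 < f s) → (∀ s : ℝ, f s ≤ 1 / 4) →
      ∀ (D : Set (EuclideanSpace ℝ (Fin d))),
        D = {z : EuclideanSpace ℝ (Fin d) | a < z i0 ∧
          Real.sqrt (∑ i ∈ Finset.univ.erase i0, z i ^ 2) < f (z i0)} →
      ∀ x ∈ D, ∀ r : ℝ, 1 ≤ r →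
        (∫⁻ z in {z ∈ D | r ≤ dist z x},
            ENNReal.ofReal (‖x - z‖ ^ (-((d : ℝ) + α)))) ≤
          ENNReal.ofReal (C * r ^ (-((d : ℝ) + α - 1))) := by
  obtain ⟨n, rfl⟩ : ∃ n, d = n + 1 := ⟨d - 1, by omega⟩
  set p : ℝ := ((n + 1 : ℕ) : ℝ) + α
  have hp : 1 < p := by
    have : (2 : ℝ) ≤ ((n + 1 : ℕ) : ℝ) := by exact_mod_cast hd
    linarith
  refine ⟨2 ^ p / (p - 1), div_pos (by positivity) (by linarith), ?_⟩
  rintro i0 - a f - hf D hD x hx r hr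
  have htrans : ∀ z ∈ D, ∑ i ∈ Finset.univ.erase i0, z i ^ 2 < (1 / 4) ^ 2 := by
    rw [hD]
    exact fun z hz => (Real.sqrt_lt' (by norm_num)).1 (hz.2.trans_le (hf _))
  have hsub : {z ∈ D | r ≤ dist z x} ⊆ {z | r / 2 ≤ |z i0 - x i0| ∧
      (fun j => z (i0.succAbove j)) ∈ Metric.ball 0 (1 / 4)} := by
    rintro z ⟨hz, hzx⟩
    exact ⟨EuclideanSpace.half_le_abs_sub_apply_of_le_dist hr (htrans x hx) (htrans z hz) hzx,
      mem_ball_zero_comp_succAbove_of_sum_erase_sq_lt (by norm_num) (htrans z hz)⟩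
  calc _ ≤ ∫⁻ z in {z | r / 2 ≤ |z i0 - x i0| ∧
          (fun j => z (i0.succAbove j)) ∈ Metric.ball 0 (1 / 4)},
          ENNReal.ofReal (‖x - z‖ ^ (-p)) :=
        lintegral_mono_set hsub
    _ ≤ ENNReal.ofReal (2 * (r / 2) ^ (1 - p) / (p - 1)) * ENNReal.ofReal ((2 * (1 / 4)) ^ n) :=
        EuclideanSpace.setLIntegral_norm_sub_rpow_neg_slab_le i0 x hp (by linarith) (by norm_num)
    _ ≤ ENNReal.ofReal (2 * (r / 2) ^ (1 - p) / (p - 1)) :=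
        mul_le_of_le_one_right' (ENNReal.ofReal_le_one.2 (pow_le_one₀ (by norm_num) (by norm_num)))
    _ = ENNReal.ofReal (2 ^ p / (p - 1) * r ^ (-(p - 1))) := by
        rw [Real.div_rpow (by linarith) zero_le_two, neg_sub, mul_div_assoc', ← mul_div_right_comm]
        congr 2
        rw [div_eq_mul_inv, mul_comm, ← mul_assoc, ← Real.rpow_neg zero_le_two,
          ← Real.rpow_add_one two_ne_zero]
        ring_nf

/-- There is a constant `C > 0` depending only on `d ≥ 2` and `α ∈ (0,2)` such that,
for every model horn region `D = {z ∈ ℝ^d : z₁ > a, ‖z̃‖ < f z₁}` with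
`f : ℝ → (0, 1/4]`, every `x ∈ D` and every `r ≥ 1`,
`∫_{z ∈ D, |z - x| ≥ r} |x - z|^(-(d+α)) dz ≤ C * r^(-(d+α-1))`. -/
theorem stmt16 (d : ℕ) (hd : 2 ≤ d) (α : ℝ) (hα0 : 0 < α) (hα2 : α < 2) :
    ∃ C : ℝ, 0 < C ∧
      ∀ (i0 : Fin d), (i0 : ℕ) = 0 →
      ∀ (a : ℝ) (f : ℝ → ℝ), (∀ s : ℝ, 0 < f s) → (∀ s : ℝ, f s ≤ 1 / 4) →
      ∀ (D : Set (EuclideanSpace ℝ (Fin d))),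
        D = {z : EuclideanSpace ℝ (Fin d) | a < z i0 ∧
          Real.sqrt (∑ i ∈ Finset.univ.erase i0, z i ^ 2) < f (z i0)} →
      ∀ x ∈ D, ∀ r : ℝ, 1 ≤ r →
        (∫⁻ z in {z ∈ D | r ≤ dist z x},
            ENNReal.ofReal (‖x - z‖ ^ (-((d : ℝ) + α)))) ≤
          ENNReal.ofReal (C * r ^ (-((d : ℝ) + α - 1))) :=
  stmt16_general d hd α hα0
end

section
/- Let d ≥ 2 be an integer and α ∈ (0,2). There exists a constant c > 0, depending only on d and α, with the following property: for every a ∈ ℝ, every non-increasing function f : ℝ → (0, 1/4], and every z ∈ D, ∫_{ℝ^d \ D} |z−y|^{−(d+α)} dy ≥ c·f(z₁)^{−α}, where D := {y ∈ ℝ^d : y₁ > a and |ỹ| < f(y₁)} and points of ℝ^d are written y = (y₁, ỹ) with ỹ = (y₂, …, y_d) ∈ ℝ^{d−1}. -/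
/-!
Write `F = f z₁`. The ball of radius `F` centred at `z + F e₁ + 3F e₂` lies in `Dᶜ`: its
points `y` have `y₁ > z₁`, hence `f y₁ ≤ F` by monotonicity, while `|ỹ| > 3F - |z̃| - F > F`.
The ball also lies within distance `5F` of `z`, so the integral is at least
`(5F)^{-(d+α)} · |B(0,1)| F^d`, which is `c F^{-α}` with `c = 5^{-(d+α)} |B(0,1)|`.
-/

open MeasureTheory Metric

section Kernel

variable {E : Type*} [NormedAddCommGroup E] [MeasurableSpace E]

lemma ofReal_rpow_neg_mul_le_setLIntegral (μ : Measure E) {s t : Set E} (hs : MeasurableSet s)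
    (hst : s ⊆ t) {z : E} (hz : z ∉ s) {R p : ℝ} (hsR : s ⊆ closedBall z R) (hp : 0 ≤ p) :
    ENNReal.ofReal (R ^ (-p)) * μ s ≤ ∫⁻ y in t, ENNReal.ofReal (‖z - y‖ ^ (-p)) ∂μ :=
  calc ENNReal.ofReal (R ^ (-p)) * μ s = ∫⁻ _ in s, ENNReal.ofReal (R ^ (-p)) ∂μ :=
        (setLIntegral_const s _).symm
    _ ≤ ∫⁻ y in s, ENNReal.ofReal (‖z - y‖ ^ (-p)) ∂μ := by
        refine setLIntegral_mono' hs fun y hy => ENNReal.ofReal_le_ofReal ?_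
        have hyz : 0 < ‖z - y‖ := norm_pos_iff.mpr (sub_ne_zero.mpr fun h => hz (h ▸ hy))
        have hyR : ‖z - y‖ ≤ R := by simpa [dist_eq_norm'] using hsR hy
        exact Real.rpow_le_rpow_of_nonpos hyz hyR (neg_nonpos.mpr hp)
    _ ≤ ∫⁻ y in t, ENNReal.ofReal (‖z - y‖ ^ (-p)) ∂μ := lintegral_mono_set hst

end Kernel

namespace EuclideanSpace

variable {ι : Type*} [Fintype ι]

lemma ofReal_rpow_neg_mul_volume_ball [Nonempty ι] (w : EuclideanSpace ℝ ι) {r : ℝ} (hr : 0 < r)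
    {k : ℝ} (hk : 0 ≤ k) (p : ℝ) :
    ENNReal.ofReal ((k * r) ^ (-(Fintype.card ι + p))) * volume (ball w r) =
      ENNReal.ofReal (k ^ (-(Fintype.card ι + p)) *
        (volume (ball (0 : EuclideanSpace ℝ ι) 1)).toReal * r ^ (-p)) := by
  have hscale : (k * r) ^ (-(Fintype.card ι + p)) * r ^ Fintype.card ι =
      k ^ (-(Fintype.card ι + p)) * r ^ (-p) := by
    rw [Real.mul_rpow hk hr.le, ← Real.rpow_natCast, mul_assoc, ← Real.rpow_add hr]
    ring_nf
  rw [Measure.addHaar_ball volume w hr.le, finrank_euclideanSpace, ← mul_assoc,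
    ← ENNReal.ofReal_mul (by positivity), hscale, mul_right_comm (k ^ _),
    ENNReal.ofReal_mul (p := k ^ _ * r ^ _) (by positivity),
    ENNReal.ofReal_toReal measure_ball_lt_top.ne]

variable [DecidableEq ι]

/-- `transverse i₀ x` is `x` with its `i₀`-th coordinate set to `0`; its norm is `|x̃|`. -/
noncomputable def transverse (i₀ : ι) : EuclideanSpace ℝ ι →L[ℝ] EuclideanSpace ℝ ι :=
  ContinuousLinearMap.id ℝ _ - (EuclideanSpace.proj i₀).smulRight (EuclideanSpace.single i₀ 1)

variable (i₀ : ι)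

lemma transverse_apply (x : EuclideanSpace ℝ ι) (i : ι) :
    transverse i₀ x i = if i = i₀ then 0 else x i := by
  by_cases h : i = i₀
  · subst h; simp [transverse]
  · simp [transverse, h]

lemma transverse_single_self (c : ℝ) : transverse i₀ (single i₀ c) = 0 := by
  ext i; by_cases h : i = i₀ <;> simp [transverse_apply, h]

lemma transverse_single_of_ne {i₁ : ι} (h : i₁ ≠ i₀) (c : ℝ) :
    transverse i₀ (single i₁ c) = single i₁ c := by
  ext i; by_cases hi : i = i₀ <;> simp [transverse_apply, hi, h.symm]

lemma norm_transverse (x : EuclideanSpace ℝ ι) :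
    ‖transverse i₀ x‖ = √(∑ i ∈ Finset.univ.erase i₀, x i ^ 2) := by
  rw [EuclideanSpace.norm_eq, ← Finset.add_sum_erase _ _ (Finset.mem_univ i₀)]
  congr 1
  rw [transverse_apply, if_pos rfl, norm_zero, zero_pow two_ne_zero, zero_add]
  refine Finset.sum_congr rfl fun i hi => ?_
  rw [transverse_apply, if_neg (Finset.ne_of_mem_erase hi), Real.norm_eq_abs, sq_abs]

lemma norm_transverse_le (x : EuclideanSpace ℝ ι) : ‖transverse i₀ x‖ ≤ ‖x‖ := by
  rw [norm_transverse, EuclideanSpace.norm_eq]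
  refine Real.sqrt_le_sqrt ((Finset.sum_le_sum_of_subset_of_nonneg (Finset.erase_subset _ _)
    fun _ _ _ => by positivity).trans_eq ?_)
  simp

variable {i₀} {i₁ : ι} {y z : EuclideanSpace ℝ ι} {r : ℝ}

lemma apply_lt_of_mem_ball (h : i₁ ≠ i₀) (hy : y ∈ ball (z + single i₀ r + single i₁ (3 * r)) r) :
    z i₀ < y i₀ := by
  have hcoord := (PiLp.norm_apply_le (y - (z + single i₀ r + single i₁ (3 * r))) i₀).trans_lt
    (mem_ball_iff_norm.mp hy)
  simp only [PiLp.sub_apply, PiLp.add_apply, PiLp.single_apply, if_pos, h.symm, if_false,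
    add_zero, Real.norm_eq_abs] at hcoord
  linarith [(abs_lt.mp hcoord).1]

lemma lt_norm_transverse_of_mem_ball (h : i₁ ≠ i₀) (hz : ‖transverse i₀ z‖ ≤ r)
    (hy : y ∈ ball (z + single i₀ r + single i₁ (3 * r)) r) : r < ‖transverse i₀ y‖ := by
  set w := z + single i₀ r + single i₁ (3 * r)
  have hr : 0 ≤ r := (norm_nonneg _).trans hz
  have hw : transverse i₀ w - transverse i₀ z = single i₁ (3 * r) := by
    simp [w, transverse_single_self, transverse_single_of_ne _ h]
  have hwz : 3 * r ≤ ‖transverse i₀ w‖ + ‖transverse i₀ z‖ := by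
    have := norm_sub_le (transverse i₀ w) (transverse i₀ z)
    rwa [hw, PiLp.norm_single, Real.norm_eq_abs, abs_of_nonneg (by positivity)] at this
  have hwy : ‖transverse i₀ w‖ ≤ ‖transverse i₀ y‖ + ‖w - y‖ := by
    calc ‖transverse i₀ w‖ = ‖transverse i₀ y + transverse i₀ (w - y)‖ := by
          rw [map_sub, add_sub_cancel]
      _ ≤ ‖transverse i₀ y‖ + ‖w - y‖ :=
          (norm_add_le _ _).trans (by gcongr; exact norm_transverse_le i₀ _)
  have hyw : ‖w - y‖ < r := by rw [← dist_eq_norm, dist_comm]; exact hy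
  linarith

lemma ball_add_single_add_single_subset_ball (hr : 0 ≤ r) :
    ball (z + single i₀ r + single i₁ (3 * r)) r ⊆ ball z (5 * r) := by
  refine ball_subset_ball' ?_
  calc r + dist (z + single i₀ r + single i₁ (3 * r)) z
        = r + ‖single i₀ r + single i₁ (3 * r)‖ := by
        rw [dist_eq_norm, add_assoc, add_sub_cancel_left]
    _ ≤ r + (r + 3 * r) := by
        gcongr
        refine (norm_add_le _ _).trans_eq ?_
        simp [abs_of_nonneg hr]
    _ = 5 * r := by ring

end EuclideanSpace

open EuclideanSpace

def hornRegion {ι : Type*} [Fintype ι] [DecidableEq ι] (i₀ : ι) (a : ℝ) (f : ℝ → ℝ) :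
    Set (EuclideanSpace ℝ ι) :=
  {y | a < y i₀ ∧ ‖transverse i₀ y‖ < f (y i₀)}

section HornRegion

variable {ι : Type*} [Fintype ι] [DecidableEq ι] {i₀ i₁ : ι} {a : ℝ} {f : ℝ → ℝ}
  {z : EuclideanSpace ℝ ι}

lemma ball_subset_compl_hornRegion (hf : Antitone f) (h : i₁ ≠ i₀) (hz : z ∈ hornRegion i₀ a f) :
    ball (z + single i₀ (f (z i₀)) + single i₁ (3 * f (z i₀))) (f (z i₀)) ⊆ (hornRegion i₀ a f)ᶜ :=
  fun _ hy hyD => (hf (apply_lt_of_mem_ball h hy).le).not_gt <|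
    (lt_norm_transverse_of_mem_ball h hz.2.le hy).trans hyD.2

end HornRegion

theorem stmt17_general (d : ℕ) (hd : 2 ≤ d) (α : ℝ) (hα0 : 0 < α) :
    ∃ c : ℝ, 0 < c ∧
      ∀ (i0 : Fin d), (i0 : ℕ) = 0 →
      ∀ (a : ℝ) (f : ℝ → ℝ), (∀ s : ℝ, 0 < f s) → (∀ s : ℝ, f s ≤ 1 / 4) →
        (∀ u v : ℝ, u ≤ v → f v ≤ f u) →
      ∀ (D : Set (EuclideanSpace ℝ (Fin d))),
        D = {y : EuclideanSpace ℝ (Fin d) | a < y i0 ∧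
          Real.sqrt (∑ i ∈ Finset.univ.erase i0, y i ^ 2) < f (y i0)} →
      ∀ z ∈ D,
        ENNReal.ofReal (c * f (z i0) ^ (-α)) ≤
          ∫⁻ y in Dᶜ, ENNReal.ofReal (‖z - y‖ ^ (-((d : ℝ) + α))) := by
  set κ := volume (ball (0 : EuclideanSpace ℝ (Fin d)) 1)
  have hκ : 0 < κ.toReal :=
    ENNReal.toReal_pos (measure_ball_pos _ _ one_pos).ne' measure_ball_lt_top.ne
  refine ⟨5 ^ (-((d : ℝ) + α)) * κ.toReal, by positivity, ?_⟩
  rintro i0 - a f hf_pos - hf_anti D rfl z hz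
  obtain ⟨i1, hi1⟩ := Fintype.exists_ne_of_one_lt_card (by rw [Fintype.card_fin]; omega) i0
  have hD : {y : EuclideanSpace ℝ (Fin d) | a < y i0 ∧
      √(∑ i ∈ Finset.univ.erase i0, y i ^ 2) < f (y i0)} = hornRegion i0 a f := by
    simp only [hornRegion, norm_transverse]
  rw [hD] at hz ⊢
  have : Nonempty (Fin d) := ⟨i0⟩
  set F := f (z i0)
  have hball := ball_subset_compl_hornRegion hf_anti hi1 hz
  calc ENNReal.ofReal (5 ^ (-((d : ℝ) + α)) * κ.toReal * F ^ (-α))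
      = ENNReal.ofReal ((5 * F) ^ (-((d : ℝ) + α))) *
          volume (ball (z + single i0 F + single i1 (3 * F)) F) := by
        have hvol := ofReal_rpow_neg_mul_volume_ball (z + single i0 F + single i1 (3 * F))
          (hf_pos (z i0)) (by norm_num : (0 : ℝ) ≤ 5) α
        rw [Fintype.card_fin] at hvol
        exact hvol.symm
    _ ≤ _ := ofReal_rpow_neg_mul_le_setLIntegral volume measurableSet_ball hball
        (fun hzb => hball hzb hz)
        ((ball_add_single_add_single_subset_ball (hf_pos _).le).trans ball_subset_closedBall)
        (by positivity)

/-- There is a constant `c > 0` depending only on `d ≥ 2` and `α ∈ (0,2)` such that,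
for every model horn region `D = {y ∈ ℝ^d : y₁ > a, ‖ỹ‖ < f y₁}` with
`f : ℝ → (0, 1/4]` non-increasing, and every `z ∈ D`,
`∫_{ℝ^d \ D} |z - y|^(-(d+α)) dy ≥ c * f (z₁) ^ (-α)`. -/
theorem stmt17 (d : ℕ) (hd : 2 ≤ d) (α : ℝ) (hα0 : 0 < α) (hα2 : α < 2) :
    ∃ c : ℝ, 0 < c ∧
      ∀ (i0 : Fin d), (i0 : ℕ) = 0 →
      ∀ (a : ℝ) (f : ℝ → ℝ), (∀ s : ℝ, 0 < f s) → (∀ s : ℝ, f s ≤ 1 / 4) →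
        (∀ u v : ℝ, u ≤ v → f v ≤ f u) →
      ∀ (D : Set (EuclideanSpace ℝ (Fin d))),
        D = {y : EuclideanSpace ℝ (Fin d) | a < y i0 ∧
          Real.sqrt (∑ i ∈ Finset.univ.erase i0, y i ^ 2) < f (y i0)} →
      ∀ z ∈ D,
        ENNReal.ofReal (c * f (z i0) ^ (-α)) ≤
          ∫⁻ y in Dᶜ, ENNReal.ofReal (‖z - y‖ ^ (-((d : ℝ) + α))) :=
  stmt17_general d hd α hα0
end
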